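/- arXiv:1004.2639 — 9 statements merged into one kernel-verified Lean document; each statement's English description precedes it below -/
import Mathlib

section
/- Let M be a matroid on a finite ground set E with rank function r, having no loops and no coloops. Then max{T_M(4,0), T_M(0,4)} ≥ T_M(2,2), where T_M denotes the Tutte polynomial of M. -/
/-!
`T_M(2,2) = 2^|E|`, and `2^|E| ≤ 4^max(r(E), |E| - r(E))`. Deletion–contraction shows
`T_M(x,y) ≥ 0` for `x, y ≥ 0`. If `M` has no loops, splitting off coloops (factor `x`) and
deleting the other elements gives `T_M(x,y) ≥ x^r(E)`; dually, if `M` has no coloops, splitting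
off loops (factor `y`) and contracting the other elements gives `T_M(x,y) ≥ y^(|E| - r(E))`.
-/

open Matroid Set

variable {α : Type*}

/-- The rank of a set `X` in a matroid `M`:
the maximum size of an independent subset of `X`. -/
noncomputable def Matroid.rankSet (M : Matroid α) (X : Set α) : ℕ :=
  sSup {n | ∃ I ⊆ X, M.Indep I ∧ I.ncard = n}

/-- The Tutte polynomial of a matroid `M` on a finite type, evaluated at `(x, y) : ℝ × ℝ`:
`T_M(x,y) = Σ_{A ⊆ E} (x−1)^{r(E)−r(A)} · (y−1)^{|A|−r(A)}`. -/
noncomputable def Matroid.tutte [Fintype α] (M : Matroid α) (x y : ℝ) : ℝ :=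
  ∑ A ∈ M.E.toFinite.toFinset.powerset,
    (x - 1) ^ (M.rankSet M.E - M.rankSet ↑A) * (y - 1) ^ (A.card - M.rankSet ↑A)

noncomputable def tutteEval (E : Finset α) (r : Finset α → ℕ) (x y : ℝ) : ℝ :=
  ∑ A ∈ E.powerset, (x - 1) ^ (r E - r A) * (y - 1) ^ (A.card - r A)

theorem tutteEval_empty {r : Finset α → ℕ} {x y : ℝ} : tutteEval ∅ r x y = 1 := by
  simp [tutteEval]

theorem tutteEval_two_two {E : Finset α} {r : Finset α → ℕ} :
    tutteEval E r 2 2 = 2 ^ E.card := by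
  norm_num [tutteEval]

section RankFunction

variable [DecidableEq α]

/-- The axioms are imposed on all finsets of `α`, not relative to a ground set: deleting elements
then keeps the same rank function and only shrinks the ground set passed to `tutteEval`. -/
structure IsRankFn (r : Finset α → ℕ) : Prop where
  empty : r ∅ = 0
  mono : Monotone r
  insert_le (e : α) (A : Finset α) : r (insert e A) ≤ r A + 1
  submod (A B : Finset α) : r (A ∪ B) + r (A ∩ B) ≤ r A + r B

def contractRank (r : Finset α → ℕ) (e : α) (A : Finset α) : ℕ := r (insert e A) - 1

namespace IsRankFn

variable {r : Finset α → ℕ} (hr : IsRankFn r) {A B : Finset α} {e : α}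
include hr

theorem le_card (A : Finset α) : r A ≤ A.card := by
  induction A using Finset.induction_on with
  | empty => simp [hr.empty]
  | insert e A heA ih => grw [hr.insert_le, ih, Finset.card_insert_of_notMem heA]

theorem insert_add_le (hAB : A ⊆ B) : r (insert e B) + r A ≤ r (insert e A) + r B := by
  have h := hr.submod (insert e A) B
  rw [Finset.insert_union, Finset.union_eq_right.2 hAB] at h
  have := hr.mono (Finset.subset_inter (Finset.subset_insert e A) hAB)
  omega

theorem insert_eq_of_loop (he : r {e} = 0) (A : Finset α) : r (insert e A) = r A := by
  have h := hr.insert_add_le (e := e) (Finset.empty_subset A)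
  rw [Finset.insert_empty, he, hr.empty] at h
  exact le_antisymm (by omega) (hr.mono (Finset.subset_insert e A))

theorem insert_eq_add_one_of_subset (hAB : A ⊆ B) (he : r (insert e B) = r B + 1) :
    r (insert e A) = r A + 1 := by
  have := hr.insert_add_le (e := e) hAB
  have := hr.insert_le e A
  omega

theorem one_le_insert (he : r {e} = 1) (A : Finset α) : 1 ≤ r (insert e A) :=
  he ▸ hr.mono (Finset.singleton_subset_iff.2 (Finset.mem_insert_self e A))

theorem contract (he : r {e} = 1) : IsRankFn (contractRank r e) where
  empty := by simp [contractRank, he]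
  mono A B hAB := Nat.sub_le_sub_right (hr.mono (Finset.insert_subset_insert e hAB)) 1
  insert_le f A := by
    have := hr.insert_le f (insert e A)
    have := hr.one_le_insert he A
    simp only [contractRank, Finset.insert_comm e f]
    omega
  submod A B := by
    have := hr.submod (insert e A) (insert e B)
    rw [← Finset.insert_union_distrib, ← Finset.insert_inter_distrib] at this
    have := hr.one_le_insert he (A ∩ B)
    have := hr.one_le_insert he (A ∪ B)
    simp only [contractRank]
    omega

theorem loop_or_coloop_or_neither (e : α) (E : Finset α) :
    r {e} = 0 ∨ r (insert e E) = r E + 1 ∨ (r {e} = 1 ∧ r (insert e E) = r E) := by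
  have := Finset.card_singleton e ▸ hr.le_card {e}
  have := hr.insert_le e E
  have := hr.mono (Finset.subset_insert e E)
  omega

end IsRankFn

variable {r : Finset α → ℕ} {E : Finset α} {e : α} {x y : ℝ}

theorem tutteEval_insert (he : e ∉ E) : tutteEval (insert e E) r x y =
    ∑ A ∈ E.powerset, (x - 1) ^ (r (insert e E) - r A) * (y - 1) ^ (A.card - r A) +
    ∑ A ∈ E.powerset, (x - 1) ^ (r (insert e E) - r (insert e A)) *
      (y - 1) ^ (A.card + 1 - r (insert e A)) := by
  rw [tutteEval, Finset.sum_powerset_insert he]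
  congr 1
  refine Finset.sum_congr rfl fun A hA => ?_
  rw [Finset.card_insert_of_notMem fun heA => he (Finset.mem_powerset.1 hA heA)]

theorem tutteEval_insert_of_loop (hr : IsRankFn r) (he : e ∉ E) (h0 : r {e} = 0) :
    tutteEval (insert e E) r x y = y * tutteEval E r x y := by
  rw [tutteEval_insert he, tutteEval, Finset.mul_sum, ← Finset.sum_add_distrib]
  simp only [hr.insert_eq_of_loop h0]
  refine Finset.sum_congr rfl fun A _ => ?_
  rw [Nat.sub_add_comm (hr.le_card A), pow_succ]
  ring

theorem tutteEval_insert_of_coloop (hr : IsRankFn r) (he : e ∉ E)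
    (hc : r (insert e E) = r E + 1) :
    tutteEval (insert e E) r x y = x * tutteEval E r x y := by
  rw [tutteEval_insert he, tutteEval, Finset.mul_sum, ← Finset.sum_add_distrib]
  refine Finset.sum_congr rfl fun A hA => ?_
  have hAE : r A ≤ r E := hr.mono (Finset.mem_powerset.1 hA)
  rw [hr.insert_eq_add_one_of_subset (Finset.mem_powerset.1 hA) hc, hc,
    Nat.sub_add_comm hAE, pow_succ, Nat.add_sub_add_right, Nat.add_sub_add_right]
  ring

theorem tutteEval_insert_eq_add_contract (hr : IsRankFn r) (he : e ∉ E) (h1 : r {e} = 1)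
    (hn : r (insert e E) = r E) :
    tutteEval (insert e E) r x y = tutteEval E r x y + tutteEval E (contractRank r e) x y := by
  rw [tutteEval_insert he, hn, tutteEval, tutteEval]
  congr 1
  refine Finset.sum_congr rfl fun A _ => ?_
  have := hr.one_le_insert h1 A
  have := hr.one_le_insert h1 E
  simp only [contractRank]
  congr 2 <;> omega

theorem tutteEval_nonneg (hr : IsRankFn r) (hx : 0 ≤ x) (hy : 0 ≤ y) :
    0 ≤ tutteEval E r x y := by
  induction E using Finset.induction_on generalizing r with
  | empty => rw [tutteEval_empty]; exact zero_le_one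
  | insert e E he ih =>
    rcases hr.loop_or_coloop_or_neither e E with h0 | hc | ⟨h1, hn⟩
    · rw [tutteEval_insert_of_loop hr he h0]
      exact mul_nonneg hy (ih hr)
    · rw [tutteEval_insert_of_coloop hr he hc]
      exact mul_nonneg hx (ih hr)
    · rw [tutteEval_insert_eq_add_contract hr he h1 hn]
      exact add_nonneg (ih hr) (ih (hr.contract h1))

theorem pow_rank_le_tutteEval (hr : IsRankFn r) (hx : 0 ≤ x) (hy : 0 ≤ y)
    (hloop : ∀ e ∈ E, r {e} ≠ 0) : x ^ r E ≤ tutteEval E r x y := by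
  induction E using Finset.induction_on generalizing r with
  | empty => rw [tutteEval_empty, hr.empty, pow_zero]
  | insert e E he ih =>
    have hloopE : ∀ f ∈ E, r {f} ≠ 0 := fun f hf => hloop f (Finset.mem_insert_of_mem hf)
    rcases hr.loop_or_coloop_or_neither e E with h0 | hc | ⟨h1, hn⟩
    · exact absurd h0 (hloop e (Finset.mem_insert_self e E))
    · rw [tutteEval_insert_of_coloop hr he hc, hc, pow_succ']
      exact mul_le_mul_of_nonneg_left (ih hr hloopE) hx
    · rw [tutteEval_insert_eq_add_contract hr he h1 hn, hn]
      exact le_add_of_le_of_nonneg (ih hr hloopE) (tutteEval_nonneg (hr.contract h1) hx hy)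

theorem pow_nullity_le_tutteEval (hr : IsRankFn r) (hx : 0 ≤ x) (hy : 0 ≤ y)
    (hcoloop : ∀ e ∈ E, r (E.erase e) = r E) : y ^ (E.card - r E) ≤ tutteEval E r x y := by
  induction E using Finset.induction_on generalizing r with
  | empty => rw [tutteEval_empty, Finset.card_empty, Nat.zero_sub, pow_zero]
  | insert e E he ih =>
    have herase : ∀ f ∈ E, (insert e E).erase f = insert e (E.erase f) := fun f hf =>
      Finset.erase_insert_of_ne fun hef => he (hef ▸ hf)
    have hcoloop' : ∀ f ∈ E, r (insert e (E.erase f)) = r (insert e E) := fun f hf =>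
      herase f hf ▸ hcoloop f (Finset.mem_insert_of_mem hf)
    rw [Finset.card_insert_of_notMem he]
    rcases hr.loop_or_coloop_or_neither e E with h0 | hc | ⟨h1, hn⟩
    · have hcoloopE : ∀ f ∈ E, r (E.erase f) = r E := fun f hf => by
        simpa only [hr.insert_eq_of_loop h0] using hcoloop' f hf
      rw [tutteEval_insert_of_loop hr he h0, hr.insert_eq_of_loop h0,
        Nat.sub_add_comm (hr.le_card E), pow_succ']
      exact mul_le_mul_of_nonneg_left (ih hr hcoloopE) hy
    · have := hcoloop e (Finset.mem_insert_self e E)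
      rw [Finset.erase_insert he] at this
      omega
    · have hcoloopE : ∀ f ∈ E, contractRank r e (E.erase f) = contractRank r e E :=
        fun f hf => by simp only [contractRank, hcoloop' f hf]
      have hrank : E.card + 1 - r (insert e E) = E.card - contractRank r e E := by
        have := hr.one_le_insert h1 E
        simp only [contractRank]
        omega
      rw [tutteEval_insert_eq_add_contract hr he h1 hn, hrank]
      exact le_add_of_nonneg_of_le (tutteEval_nonneg hr hx hy) (ih (hr.contract h1) hcoloopE)

end RankFunction

theorem Matroid.cast_rankSet {M : Matroid α} {X : Set α} (hX : M.IsRkFinite X) :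
    (M.rankSet X : ℕ∞) = M.eRk X := by
  obtain ⟨I, hI, hIfin⟩ := hX.exists_finite_isBasis'
  have hmax : IsGreatest {n | ∃ J ⊆ X, M.Indep J ∧ J.ncard = n} I.ncard := by
    refine ⟨⟨I, hI.subset, hI.indep, rfl⟩, ?_⟩
    rintro _ ⟨J, hJX, hJ, rfl⟩
    have hJI : J.encard ≤ I.encard := hI.eRk_eq_encard ▸ hJ.encard_le_eRk_of_subset hJX
    exact ENat.toNat_le_toNat hJI hIfin.encard_lt_top.ne
  rw [Matroid.rankSet, hmax.csSup_eq, hIfin.cast_ncard_eq, hI.eRk_eq_encard]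

theorem Matroid.cast_rankSet_finset (M : Matroid α) (A : Finset α) :
    (M.rankSet A : ℕ∞) = M.eRk A :=
  Matroid.cast_rankSet (M.isRkFinite_of_finite A.finite_toSet)

theorem Matroid.isRankFn_rankSet [DecidableEq α] (M : Matroid α) :
    IsRankFn fun A : Finset α => M.rankSet A where
  empty := by simpa using M.cast_rankSet_finset ∅
  mono A B hAB := by
    have := M.eRk_mono (Finset.coe_subset.2 hAB)
    rwa [← M.cast_rankSet_finset, ← M.cast_rankSet_finset, Nat.cast_le] at this
  insert_le e A := by
    have := M.eRk_insert_le_add_one e A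
    rw [← Finset.coe_insert, ← M.cast_rankSet_finset, ← M.cast_rankSet_finset] at this
    exact_mod_cast this
  submod A B := by
    have := M.eRk_inter_add_eRk_union_le A B
    rw [← Finset.coe_inter, ← Finset.coe_union, ← M.cast_rankSet_finset,
      ← M.cast_rankSet_finset, ← M.cast_rankSet_finset, ← M.cast_rankSet_finset] at this
    norm_cast at this
    omega

theorem Matroid.eRk_ground_diff_singleton_of_not_isColoop {M : Matroid α} {e : α}
    (he : ¬ M.IsColoop e) : M.eRk (M.E \ {e}) = M.eRk M.E := by
  obtain ⟨B, hB, heB⟩ : ∃ B, M.IsBase B ∧ e ∉ B := by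
    simpa [isColoop_iff_forall_mem_isBase] using he
  refine le_antisymm (M.eRk_mono sdiff_subset) ?_
  rw [eRk_ground, ← hB.encard_eq_eRank]
  exact hB.indep.encard_le_eRk_of_subset (subset_sdiff_singleton hB.subset_ground heB)

theorem Matroid.tutte_eq_tutteEval [Fintype α] (M : Matroid α) (x y : ℝ) :
    M.tutte x y = tutteEval M.E.toFinite.toFinset (fun A => M.rankSet A) x y := by
  rw [Matroid.tutte, tutteEval, Set.Finite.coe_toFinset]

/-- If a matroid on a finite ground set has no loops and no coloops, then
`max{T_M(4,0), T_M(0,4)} ≥ T_M(2,2)`. -/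
theorem tutte_two_two_le_max [Fintype α] (M : Matroid α)
    (hloop : ∀ e ∈ M.E, M.rankSet {e} ≠ 0)
    (hcoloop : ∀ e ∈ M.E, ¬ (∀ B, M.IsBase B → e ∈ B)) :
    M.tutte 2 2 ≤ max (M.tutte 4 0) (M.tutte 0 4) := by
  classical
  set E := M.E.toFinite.toFinset
  set r : Finset α → ℕ := fun A => M.rankSet A
  have hmem : ∀ {e}, e ∈ E ↔ e ∈ M.E := Set.Finite.mem_toFinset _
  have hloopE : ∀ e ∈ E, r {e} ≠ 0 := by
    simpa only [r, Finset.coe_singleton, hmem] using hloop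
  have hcoloopE : ∀ e ∈ E, r (E.erase e) = r E := fun e he => by
    have hne : ¬ M.IsColoop e := fun h => hcoloop e (hmem.1 he) fun B hB => h.mem_of_isBase hB
    apply Nat.cast_injective (R := ℕ∞)
    rw [M.cast_rankSet_finset, M.cast_rankSet_finset, Finset.coe_erase, Set.Finite.coe_toFinset]
    exact M.eRk_ground_diff_singleton_of_not_isColoop hne
  have two_pow_le : ∀ n m : ℕ, n ≤ 2 * m → (2 : ℝ) ^ n ≤ 4 ^ m := fun n m h => by
    calc (2 : ℝ) ^ n ≤ 2 ^ (2 * m) := pow_le_pow_right₀ one_le_two h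
      _ = 4 ^ m := by rw [pow_mul]; norm_num
  simp only [M.tutte_eq_tutteEval, tutteEval_two_two]
  rcases le_total E.card (2 * r E) with h | h
  · exact le_max_of_le_left <| (two_pow_le _ _ h).trans <|
      pow_rank_le_tutteEval M.isRankFn_rankSet (by norm_num) le_rfl hloopE
  · exact le_max_of_le_right <| (two_pow_le E.card (E.card - r E) (by omega)).trans <|
      pow_nullity_le_tutteEval M.isRankFn_rankSet le_rfl (by norm_num) hcoloopE
end

section
/- Let M be a matroid on a finite ground set E of size m with rank r(E) = r, and let T_M ∈ ℤ[x,y] be its Tutte polynomial with coefficients t_{ij} (the coefficient of x^i y^j). If M contains two disjoint bases, then t_{ij} = 0 whenever i + j > m − r. Dually, if the ground set E is the union of two bases of M, then t_{ij} = 0 whenever i + j > r. -/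
open Matroid Set

variable {α : Type*}

/-- The Tutte polynomial of a matroid `M` on a finite type, as a two-variable
integer polynomial: `T_M(x,y) = Σ_{A ⊆ E} (x−1)^{r(E)−r(A)} · (y−1)^{|A|−r(A)}`,
where `x = X 0` and `y = X 1`. -/
noncomputable def Matroid.tuttePoly [Fintype α] (M : Matroid α) : MvPolynomial (Fin 2) ℤ :=
  ∑ A ∈ M.E.toFinite.toFinset.powerset,
    (MvPolynomial.X 0 - 1) ^ (M.rankSet M.E - M.rankSet ↑A) *
      (MvPolynomial.X 1 - 1) ^ (A.card - M.rankSet ↑A)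

section Aux

variable [Fintype α] {M : Matroid α} {X I : Set α}

lemma aux_bddAbove (M : Matroid α) (X : Set α) :
    BddAbove {n | ∃ I ⊆ X, M.Indep I ∧ I.ncard = n} := by
  refine ⟨Fintype.card α, fun n hn => ?_⟩
  obtain ⟨I, -, -, rfl⟩ := hn
  have := ncard_le_ncard (subset_univ I) finite_univ
  simpa [ncard_univ, Nat.card_eq_fintype_card] using this

lemma aux_le_rankSet (hI : M.Indep I) (hIX : I ⊆ X) : I.ncard ≤ M.rankSet X :=
  le_csSup (aux_bddAbove M X) ⟨I, hIX, hI, rfl⟩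

lemma aux_rankSet_le {n : ℕ} (h : ∀ I ⊆ X, M.Indep I → I.ncard ≤ n) :
    M.rankSet X ≤ n :=
  csSup_le ⟨0, ∅, empty_subset X, M.empty_indep, by simp⟩
    (fun k hk => by obtain ⟨I, h1, h2, rfl⟩ := hk; exact h I h1 h2)

lemma aux_rankSet_le_ncard (X : Set α) : M.rankSet X ≤ X.ncard :=
  aux_rankSet_le fun I hIX _ => ncard_le_ncard hIX X.toFinite

lemma aux_base_ncard {B : Set α} (hB : M.IsBase B) : B.ncard = M.rankSet M.E := by
  refine le_antisymm (aux_le_rankSet hB.indep hB.subset_ground) (aux_rankSet_le ?_)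
  intro I _ hI
  obtain ⟨B', hB', hIB'⟩ := hI.exists_isBase_superset
  calc I.ncard ≤ B'.ncard := ncard_le_ncard hIB' B'.toFinite
    _ = B.ncard := hB'.ncard_eq_ncard_of_isBase hB

/-- totalDegree of one summand. -/
lemma aux_term_totalDegree (a b : ℕ) :
    (((MvPolynomial.X 0 - 1) ^ a * (MvPolynomial.X 1 - 1) ^ b :
      MvPolynomial (Fin 2) ℤ)).totalDegree ≤ a + b := by
  have h0 : ((MvPolynomial.X 0 - 1 : MvPolynomial (Fin 2) ℤ)).totalDegree ≤ 1 := by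
    rw [sub_eq_add_neg]
    refine (MvPolynomial.totalDegree_add _ _).trans ?_
    simp [MvPolynomial.totalDegree_X]
  have h1 : ((MvPolynomial.X 1 - 1 : MvPolynomial (Fin 2) ℤ)).totalDegree ≤ 1 := by
    rw [sub_eq_add_neg]
    refine (MvPolynomial.totalDegree_add _ _).trans ?_
    simp [MvPolynomial.totalDegree_X]
  calc ((MvPolynomial.X 0 - 1 : MvPolynomial (Fin 2) ℤ) ^ a *
        (MvPolynomial.X 1 - 1) ^ b).totalDegree
      ≤ ((MvPolynomial.X 0 - 1 : MvPolynomial (Fin 2) ℤ) ^ a).totalDegree +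
        ((MvPolynomial.X 1 - 1 : MvPolynomial (Fin 2) ℤ) ^ b).totalDegree :=
        MvPolynomial.totalDegree_mul _ _
    _ ≤ a * ((MvPolynomial.X 0 - 1 : MvPolynomial (Fin 2) ℤ)).totalDegree +
        b * ((MvPolynomial.X 1 - 1 : MvPolynomial (Fin 2) ℤ)).totalDegree :=
        add_le_add (MvPolynomial.totalDegree_pow _ _) (MvPolynomial.totalDegree_pow _ _)
    _ ≤ a * 1 + b * 1 := add_le_add (Nat.mul_le_mul_left a h0) (Nat.mul_le_mul_left b h1)
    _ = a + b := by ring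

lemma aux_coeff_zero (p : MvPolynomial (Fin 2) ℤ) (d : ℕ)
    (hp : p.totalDegree ≤ d) (i j : ℕ) (h : d < i + j) :
    p.coeff (Finsupp.single 0 i + Finsupp.single 1 j) = 0 := by
  apply MvPolynomial.coeff_eq_zero_of_totalDegree_lt
  set e : Fin 2 →₀ ℕ := Finsupp.single 0 i + Finsupp.single 1 j with he
  have hsum : e.sum (fun _ n => n) = i + j := by
    rw [he, Finsupp.sum_add_index' (fun _ => rfl) (fun _ _ _ => rfl)]
    simp
  have heq : ∑ k ∈ e.support, e k = e.sum (fun _ n => n) := rfl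
  rw [heq, hsum]
  omega

end Aux

/-- If a matroid `M` with `m` elements and rank `r` contains two disjoint bases, then the
coefficient `t_{ij}` of `x^i y^j` in its Tutte polynomial vanishes whenever `i + j > m − r`;
dually, if the ground set is the union of two bases, then `t_{ij} = 0` whenever `i + j > r`. -/
theorem tuttePoly_coeff_eq_zero [Fintype α] (M : Matroid α) (m r : ℕ)
    (hm : M.E.ncard = m) (hr : M.rankSet M.E = r) :
    ((∃ B₁ B₂, M.IsBase B₁ ∧ M.IsBase B₂ ∧ B₁ ∩ B₂ = ∅) →
      ∀ i j : ℕ, m - r < i + j →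
        M.tuttePoly.coeff (Finsupp.single 0 i + Finsupp.single 1 j) = 0) ∧
    ((∃ B₁ B₂, M.IsBase B₁ ∧ M.IsBase B₂ ∧ B₁ ∪ B₂ = M.E) →
      ∀ i j : ℕ, r < i + j →
        M.tuttePoly.coeff (Finsupp.single 0 i + Finsupp.single 1 j) = 0) := by
  constructor
  · rintro ⟨B₁, B₂, hB₁, hB₂, hdisj⟩ i j hij
    refine aux_coeff_zero _ (m - r) ?_ i j hij
    unfold Matroid.tuttePoly
    refine MvPolynomial.totalDegree_finsetSum_le fun A hA => ?_
    refine (aux_term_totalDegree _ _).trans ?_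
    -- set up the inequalities
    have hAE : (A : Set α) ⊆ M.E := by
      simpa using Finset.mem_powerset.mp hA
    set rA := M.rankSet (A : Set α) with hrA
    have hcard : A.card = (A : Set α).ncard := (ncard_coe_finset A).symm
    -- rA ≤ r
    have h1 : rA ≤ r := by
      rw [← hr]
      exact aux_rankSet_le fun I hIA hI => aux_le_rankSet hI (hIA.trans hAE)
    have h2 : rA ≤ (A : Set α).ncard := aux_rankSet_le_ncard _
    -- |Bᵢ| = r
    have hB₁r : B₁.ncard = r := by rw [aux_base_ncard hB₁, hr]
    have hB₂r : B₂.ncard = r := by rw [aux_base_ncard hB₂, hr]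
    -- |Bᵢ ∩ A| ≤ rA
    have hi1 : (B₁ ∩ (A : Set α)).ncard ≤ rA :=
      aux_le_rankSet (hB₁.indep.inter_right _) inter_subset_right
    have hi2 : (B₂ ∩ (A : Set α)).ncard ≤ rA :=
      aux_le_rankSet (hB₂.indep.inter_right _) inter_subset_right
    -- |Bᵢ \ A| ≥ r - rA
    have hs1 : B₁.ncard = (B₁ ∩ (A : Set α)).ncard + (B₁ \ (A : Set α)).ncard := by
      rw [← ncard_inter_add_ncard_diff_eq_ncard B₁ (A : Set α) B₁.toFinite]
    have hs2 : B₂.ncard = (B₂ ∩ (A : Set α)).ncard + (B₂ \ (A : Set α)).ncard := by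
      rw [← ncard_inter_add_ncard_diff_eq_ncard B₂ (A : Set α) B₂.toFinite]
    -- B₁ \ A and B₂ \ A are disjoint subsets of E \ A
    have hunion : (B₁ \ (A : Set α)) ∪ (B₂ \ (A : Set α)) ⊆ M.E \ (A : Set α) := by
      refine union_subset (diff_subset_diff_left hB₁.subset_ground)
        (diff_subset_diff_left hB₂.subset_ground)
    have hdisj' : Disjoint (B₁ \ (A : Set α)) (B₂ \ (A : Set α)) := by
      refine Disjoint.mono diff_subset diff_subset ?_
      rw [disjoint_iff_inter_eq_empty]
      exact hdisj
    have hcount : (B₁ \ (A : Set α)).ncard + (B₂ \ (A : Set α)).ncard ≤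
        (M.E \ (A : Set α)).ncard := by
      rw [← ncard_union_eq hdisj' (B₁ \ (A : Set α)).toFinite (B₂ \ (A : Set α)).toFinite]
      exact ncard_le_ncard hunion (M.E \ (A : Set α)).toFinite
    have hEdiff : (M.E \ (A : Set α)).ncard = m - (A : Set α).ncard := by
      rw [ncard_diff hAE, hm]
    have hAm : (A : Set α).ncard ≤ m := hm ▸ ncard_le_ncard hAE M.E.toFinite
    rw [hr, hcard]
    omega
  · rintro ⟨B₁, B₂, hB₁, hB₂, huni⟩ i j hij
    refine aux_coeff_zero _ r ?_ i j hij
    unfold Matroid.tuttePoly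
    refine MvPolynomial.totalDegree_finsetSum_le fun A hA => ?_
    refine (aux_term_totalDegree _ _).trans ?_
    have hAE : (A : Set α) ⊆ M.E := by
      simpa using Finset.mem_powerset.mp hA
    set rA := M.rankSet (A : Set α) with hrA
    have hcard : A.card = (A : Set α).ncard := (ncard_coe_finset A).symm
    have h1 : rA ≤ r := by
      rw [← hr]
      exact aux_rankSet_le fun I hIA hI => aux_le_rankSet hI (hIA.trans hAE)
    have hi1 : ((A : Set α) ∩ B₁).ncard ≤ rA :=
      aux_le_rankSet (hB₁.indep.inter_left _) inter_subset_left
    have hi2 : ((A : Set α) ∩ B₂).ncard ≤ rA :=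
      aux_le_rankSet (hB₂.indep.inter_left _) inter_subset_left
    -- |A| ≤ |A ∩ B₁| + |A ∩ B₂|
    have hAcover : (A : Set α).ncard ≤ ((A : Set α) ∩ B₁).ncard + ((A : Set α) ∩ B₂).ncard := by
      have : (A : Set α) = ((A : Set α) ∩ B₁) ∪ ((A : Set α) ∩ B₂) := by
        rw [← inter_union_distrib_left, huni]
        exact (inter_eq_left.mpr hAE).symm
      calc (A : Set α).ncard = (((A : Set α) ∩ B₁) ∪ ((A : Set α) ∩ B₂)).ncard := by rw [← this]
        _ ≤ ((A : Set α) ∩ B₁).ncard + ((A : Set α) ∩ B₂).ncard :=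
          ncard_union_le _ _
    rw [hr, hcard]
    omega
end

section
/- Let M be a rank-r paving matroid on a finite ground set E with n elements. If 2r > n, then E is the union of two bases of M. -/
open Matroid Set

variable {α : Type*}

/-- A circuit of a matroid: a minimal dependent set. -/
def Matroid.IsCircuitSet (M : Matroid α) (C : Set α) : Prop :=
  M.Dep C ∧ ∀ D, M.Dep D → D ⊆ C → D = C

/-- A matroid is paving if every circuit has size at least the rank of the matroid. -/
def Matroid.Paving (M : Matroid α) : Prop :=
  ∀ C, M.IsCircuitSet C → M.rankSet M.E ≤ C.ncard

/-- A matroid is coloopless if no element of the ground set lies in every basis. -/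
def Matroid.Coloopless (M : Matroid α) : Prop :=
  ∀ e ∈ M.E, ¬ (∀ B, M.IsBase B → e ∈ B)

/-- If `M` is a rank-`r` paving matroid on a finite ground set with `n` elements and
`2r > n`, then the ground set is the union of two bases. -/
theorem paving_union_two_bases [Fintype α] (M : Matroid α) (r n : ℕ)
    (hr : M.rankSet M.E = r) (hn : M.E.ncard = n)
    (hpav : M.Paving) (h : n < 2 * r) :
    ∃ B₁ B₂, M.IsBase B₁ ∧ M.IsBase B₂ ∧ B₁ ∪ B₂ = M.E := by
  have hEfin : M.E.Finite := Set.toFinite _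
  obtain ⟨B₁, hB₁⟩ := M.exists_isBase
  have hB₁E : B₁ ⊆ M.E := hB₁.subset_ground
  have hB₁fin : B₁.Finite := hEfin.subset hB₁E
  -- every independent set has ncard ≤ B₁.ncard
  have hub : ∀ I, M.Indep I → I.ncard ≤ B₁.ncard := by
    intro I hI
    obtain ⟨B, hB, hIB⟩ := hI.exists_isBase_superset
    have := Set.ncard_le_ncard hIB (hEfin.subset hB.subset_ground)
    rwa [hB.ncard_eq_ncard_of_isBase hB₁] at this
  -- rankSet M.E = B₁.ncard
  have hrank : M.rankSet M.E = B₁.ncard := by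
    unfold Matroid.rankSet
    apply le_antisymm
    · exact csSup_le ⟨B₁.ncard, B₁, hB₁E, hB₁.indep, rfl⟩
        (fun k ⟨I, _, hI, hk⟩ => hk ▸ hub I hI)
    · exact le_csSup ⟨B₁.ncard, fun k ⟨I, _, hI, hk⟩ => hk ▸ hub I hI⟩
        ⟨B₁, hB₁E, hB₁.indep, rfl⟩
  have hrB : B₁.ncard = r := by rw [← hrank, hr]
  -- every dependent set has ncard ≥ r
  have hdep : ∀ X, M.Dep X → r ≤ X.ncard := by
    intro X hX
    have hXE : X ⊆ M.E := hX.subset_ground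
    have hXfin : X.Finite := hEfin.subset hXE
    set T : Set ℕ := {k | ∃ D ⊆ X, M.Dep D ∧ D.ncard = k} with hT
    have hTne : T.Nonempty := ⟨X.ncard, X, Subset.rfl, hX, rfl⟩
    obtain ⟨D, hDX, hDdep, hDcard⟩ : ∃ D ⊆ X, M.Dep D ∧ D.ncard = sInf T :=
      Nat.sInf_mem hTne
    have hC : M.IsCircuitSet D := by
      refine ⟨hDdep, fun D' hD' hD'D => ?_⟩
      have h1 : sInf T ≤ D'.ncard := Nat.sInf_le ⟨D', hD'D.trans hDX, hD', rfl⟩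
      exact Set.eq_of_subset_of_ncard_le hD'D (hDcard ▸ h1) (hXfin.subset hDX)
    have := hpav D hC
    rw [hr] at this
    exact this.trans (Set.ncard_le_ncard hDX hXfin)
  -- E \ B₁ is independent since its ncard < r
  have hdcard : (M.E \ B₁).ncard = n - r := by
    rw [Set.ncard_diff hB₁E hB₁fin, hn, hrB]
  have hind : M.Indep (M.E \ B₁) := by
    by_contra hni
    have : M.Dep (M.E \ B₁) := ⟨hni, diff_subset⟩
    have := hdep _ this
    rw [hdcard] at this
    have hrn : r ≤ n := by
      rw [← hrB, ← hn]; exact Set.ncard_le_ncard hB₁E hEfin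
    omega
  obtain ⟨B₂, hB₂, hsub⟩ := hind.exists_isBase_superset
  refine ⟨B₁, B₂, hB₁, hB₂, ?_⟩
  apply subset_antisymm (union_subset hB₁E hB₂.subset_ground)
  intro x hx
  by_cases hxB : x ∈ B₁
  · exact Or.inl hxB
  · exact Or.inr (hsub ⟨hx, hxB⟩)
end

section
/- Let M be a rank-r paving matroid on a finite ground set E with n elements, having no coloops. If 2r ≤ n, then M contains two disjoint bases. -/
/-!
Take a basis `B`. If `E \ B` is spanning it contains a second basis. Otherwise pick
`e ∈ B` outside `cl(E \ B)`. Since `e` is not a coloop, basis exchange against a basis avoiding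
`e` gives `g ∉ B` with `B - e + g` a basis. As `|E \ B| ≥ r`, some `(r - 1)`-subset `I` of
`E \ B` avoids `g`; it is independent because `M` is paving, and `e ∉ cl(E \ B) ⊇ cl(I)`, so
`I + e` is a basis disjoint from `B - e + g`.
-/

open Matroid Set

variable {α : Type*}

namespace Matroid

variable {M : Matroid α} {B C I X : Set α} {e : α}

lemma IsCircuit.isCircuitSet (hC : M.IsCircuit C) : M.IsCircuitSet C :=
  ⟨hC.dep, fun _ hD hDC ↦ hC.eq_of_dep_subset hD hDC⟩

lemma IsBase.ncard_eq_rankSet [M.RankFinite] (hB : M.IsBase B) : B.ncard = M.rankSet M.E := by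
  have hsizes : {n | ∃ I ⊆ M.E, M.Indep I ∧ I.ncard = n} = Iic B.ncard := by
    ext m
    constructor
    · rintro ⟨I, -, hI, rfl⟩
      obtain ⟨B', hB', hIB'⟩ := hI.exists_isBase_superset
      exact (ncard_le_ncard hIB' hB'.finite).trans (hB'.ncard_eq_ncard_of_isBase hB).le
    · intro hm
      obtain ⟨I, hIB, hIcard⟩ := exists_subset_card_eq hm
      exact ⟨I, hIB.trans hB.subset_ground, hB.indep.subset hIB, hIcard⟩
  rw [rankSet, hsizes, csSup_Iic]

lemma Indep.isBase_of_ncard_eq_rankSet [M.RankFinite] (hI : M.Indep I)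
    (hcard : I.ncard = M.rankSet M.E) : M.IsBase I := by
  obtain ⟨B, hB, hIB⟩ := hI.exists_isBase_superset
  rwa [eq_of_subset_of_ncard_le hIB (by rw [hB.ncard_eq_rankSet, hcard]) hB.finite]

lemma Paving.indep_of_ncard_lt (hpav : M.Paving) (hXfin : X.Finite) (hX : X ⊆ M.E)
    (hlt : X.ncard < M.rankSet M.E) : M.Indep X := by
  by_contra hdep
  obtain ⟨C, hCX, hC⟩ := ((not_indep_iff hX).mp hdep).exists_isCircuit_subset
  have := hpav C hC.isCircuitSet
  have := ncard_le_ncard hCX hXfin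
  omega

lemma Coloopless.exists_isBase_exchange (hcl : M.Coloopless) (hB : M.IsBase B) (he : e ∈ B) :
    ∃ g ∈ M.E \ B, M.IsBase (insert g (B \ {e})) := by
  obtain ⟨B', hB', heB'⟩ : ∃ B', M.IsBase B' ∧ e ∉ B' := by
    simpa using hcl e (hB.subset_ground he)
  obtain ⟨g, hg, hgB⟩ := hB.exchange hB' ⟨he, heB'⟩
  exact ⟨g, ⟨hB'.subset_ground hg.1, hg.2⟩, hgB⟩

end Matroid

/-- If `M` is a rank-`r` coloopless paving matroid on a finite ground set with `n` elements
and `2r ≤ n`, then `M` contains two disjoint bases. -/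
theorem paving_two_disjoint_bases [Fintype α] (M : Matroid α) (r n : ℕ)
    (hr : M.rankSet M.E = r) (hn : M.E.ncard = n)
    (hpav : M.Paving) (hcl : M.Coloopless) (h : 2 * r ≤ n) :
    ∃ B₁ B₂, M.IsBase B₁ ∧ M.IsBase B₂ ∧ B₁ ∩ B₂ = ∅ := by
  subst hr hn
  obtain ⟨B, hB⟩ := M.exists_isBase
  by_cases hspan : M.Spanning (M.E \ B)
  · obtain ⟨B₂, hB₂, hB₂B⟩ := hspan.exists_isBase_subset
    exact ⟨B, B₂, hB, hB₂, (disjoint_sdiff_right.mono_right hB₂B).inter_eq⟩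
  obtain ⟨e, heE, hecl⟩ :=
    not_subset.mp ((spanning_iff_ground_subset_closure sdiff_subset).not.mp hspan)
  have heB : e ∈ B := by_contra fun heB ↦ hecl (M.subset_closure _ sdiff_subset ⟨heE, heB⟩)
  obtain ⟨g, hg, hgB⟩ := hcl.exists_isBase_exchange hB heB
  have hBcard := hB.ncard_eq_rankSet
  obtain ⟨I, hI, hIcard⟩ : ∃ I ⊆ (M.E \ B) \ {g}, I.ncard = (B \ {e}).ncard :=
    exists_subset_card_eq (by
      rw [ncard_sdiff_singleton_of_mem hg, ncard_sdiff_singleton_of_mem heB,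
        ncard_sdiff hB.subset_ground]
      omega)
  have hIE : I ⊆ M.E \ B := hI.trans sdiff_subset
  have heI : e ∉ I := fun heI ↦ (hIE heI).2 heB
  have hIind : M.Indep I := hpav.indep_of_ncard_lt (toFinite I) (hIE.trans sdiff_subset)
    (by rw [hIcard, ← hBcard]; exact ncard_sdiff_singleton_lt_of_mem heB)
  have hIe : M.IsBase (insert e I) :=
    ((hIind.insert_indep_iff_of_notMem heI).mpr
      ⟨heE, fun he ↦ hecl (M.closure_subset_closure hIE he)⟩).isBase_of_ncard_eq_rankSet
      (by rw [ncard_insert_of_notMem heI, hIcard, ncard_sdiff_singleton_add_one heB, hBcard])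
  refine ⟨insert g (B \ {e}), insert e I, hgB, hIe, ?_⟩
  rw [← disjoint_iff_inter_eq_empty, disjoint_insert_left, disjoint_insert_right]
  exact ⟨(·.elim (fun hge ↦ hg.2 (hge ▸ heB)) (fun hgI ↦ (hI hgI).2 rfl)), (·.2 rfl),
    (disjoint_sdiff_right.mono_right hIE).mono_left sdiff_subset⟩
end

section
/- Let M be a matroid on a finite ground set and let e be an element of M that is neither a loop nor a coloop. If both T_{M\e} (the Tutte polynomial of the deletion of e) and T_{M/e} (the Tutte polynomial of the contraction of e) are convex along the portions of the lines x+y=p lying in the positive quadrant, then T_M is convex along the portions of the lines x+y=p lying in the positive quadrant. -/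
open Matroid Set

variable {α : Type*}

/-- `T_M` is convex along the portions of the lines `x + y = p` lying in the
positive quadrant. -/
def Matroid.TutteConvexOnLines [Fintype α] (M : Matroid α) : Prop :=
  ∀ t x₁ y₁ x₂ y₂ : ℝ, 0 ≤ t → t ≤ 1 → 0 ≤ x₁ → 0 ≤ y₁ → 0 ≤ x₂ → 0 ≤ y₂ →
    x₁ + y₁ = x₂ + y₂ →
    M.tutte (t * x₁ + (1 - t) * x₂) (t * y₁ + (1 - t) * y₂) ≤
      t * M.tutte x₁ y₁ + (1 - t) * M.tutte x₂ y₂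

/-- The deletion `M \ e` of an element from a matroid. -/
noncomputable def Matroid.delElem (M : Matroid α) (e : α) : Matroid α :=
  M ↾ (M.E \ {e})

/-- The contraction `M / e` of an element from a matroid, defined by duality:
`M / e = (M✶ \ e)✶`. -/
noncomputable def Matroid.conElem (M : Matroid α) (e : α) : Matroid α :=
  (M✶ ↾ (M.E \ {e}))✶

/-! For `e` neither a loop nor a coloop, splitting the subsets `A ⊆ E` according to whether
`e ∈ A` gives the deletion–contraction identity `T_M = T_{M\e} + T_{M/e}`: the ranks in `M \ e`
are those of `M`, and `r_M(A ∪ e) = r_{M/e}(A) + 1`. Convexity along the lines `x + y = p`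
is preserved under sums. -/

namespace Matroid

section Rank

variable [Finite α] {M : Matroid α} {I X D : Set α} {e : α}

lemma rankSet_eq_ncard_of_isBasis' (hI : M.IsBasis' I X) : M.rankSet X = I.ncard := by
  refine IsGreatest.csSup_eq ⟨⟨I, hI.subset, hI.indep, rfl⟩, ?_⟩
  rintro _ ⟨J, hJX, hJ, rfl⟩
  have hJI : J.encard ≤ I.encard := hI.eRk_eq_encard ▸ hJ.encard_le_eRk_of_subset hJX
  rwa [← J.toFinite.cast_ncard_eq, ← I.toFinite.cast_ncard_eq, Nat.cast_le] at hJI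

lemma isNonloop_of_rankSet_singleton_ne_zero (h : M.rankSet {e} ≠ 0) : M.IsNonloop e := by
  obtain ⟨I, hI⟩ := M.exists_isBasis' {e}
  rw [rankSet_eq_ncard_of_isBasis' hI] at h
  obtain rfl : I = {e} :=
    (subset_singleton_iff_eq.1 hI.subset).resolve_left (by rintro rfl; simp at h)
  exact indep_singleton.1 hI.indep

lemma rankSet_delete (hXD : Disjoint X D) : (M ＼ D).rankSet X = M.rankSet X := by
  obtain ⟨I, hI⟩ := M.exists_isBasis' X
  have hI' : (M ＼ D).IsBasis' I X := delete_isBasis'_iff.2 (by rwa [hXD.sdiff_eq_left])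
  rw [rankSet_eq_ncard_of_isBasis' hI, rankSet_eq_ncard_of_isBasis' hI']

lemma rankSet_ground_diff_singleton (he : ¬ M.IsColoop e) :
    M.rankSet (M.E \ {e}) = M.rankSet M.E := by
  obtain ⟨B, hB, heB⟩ : ∃ B, M.IsBase B ∧ e ∉ B := by
    simpa [isColoop_iff_forall_mem_isBase] using he
  have hBE := hB.isBasis_ground
  rw [rankSet_eq_ncard_of_isBasis' hBE.isBasis',
    rankSet_eq_ncard_of_isBasis' (hBE.isBasis_subset (subset_sdiff_singleton hB.subset_ground heB)
      sdiff_subset).isBasis']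

lemma IsNonloop.rankSet_insert (he : M.IsNonloop e) (heX : e ∉ X) :
    M.rankSet (insert e X) = (M ／ {e}).rankSet X + 1 := by
  obtain ⟨I, hI, heI⟩ :=
    he.indep.subset_isBasis'_of_subset (singleton_subset_iff.2 (mem_insert e X))
  have hIc := hI.contract_isBasis'_sdiff_sdiff_of_subset heI
  rw [insert_sdiff_self_of_notMem heX] at hIc
  rw [rankSet_eq_ncard_of_isBasis' hI, rankSet_eq_ncard_of_isBasis' hIc,
    ncard_sdiff_singleton_add_one (singleton_subset_iff.1 heI)]

end Rank

lemma delElem_eq_delete (M : Matroid α) (e : α) : M.delElem e = M ＼ {e} := rfl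

lemma conElem_eq_contract (M : Matroid α) (e : α) : M.conElem e = M ／ {e} := rfl

section Tutte

variable [Fintype α] {M : Matroid α} {e : α}

lemma tutte_eq_sum_powerset (M : Matroid α) {F : Finset α} (hF : (F : Set α) = M.E) (x y : ℝ) :
    M.tutte x y = ∑ A ∈ F.powerset,
      (x - 1) ^ (M.rankSet M.E - M.rankSet A) * (y - 1) ^ (A.card - M.rankSet A) := by
  rw [tutte, show M.E.toFinite.toFinset = F from Finset.coe_injective (by simp [hF])]

theorem IsNonloop.tutte_eq_tutte_delete_add_tutte_contract (he : M.IsNonloop e)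
    (hco : ¬ M.IsColoop e) (x y : ℝ) :
    M.tutte x y = (M ＼ {e}).tutte x y + (M ／ {e}).tutte x y := by
  classical
  set F := (M.E \ {e}).toFinite.toFinset
  have hF : (F : Set α) = M.E \ {e} := Finite.coe_toFinset _
  have heF : e ∉ F := by simp [F]
  have hground : M.rankSet M.E = (M ／ {e}).rankSet (M.E \ {e}) + 1 := by
    rw [← he.rankSet_insert (by simp), insert_sdiff_singleton, insert_eq_of_mem he.mem_ground]
  rw [tutte_eq_sum_powerset M (F := insert e F) (by simp [hF, he.mem_ground]),
    tutte_eq_sum_powerset (M ＼ {e}) hF, tutte_eq_sum_powerset (M ／ {e}) hF,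
    Finset.sum_powerset_insert heF]
  congr 1 <;> refine Finset.sum_congr rfl fun A hA ↦ ?_
  all_goals have hAe : Disjoint (A : Set α) {e} :=
    disjoint_singleton_right.2 fun h ↦ heF (Finset.mem_powerset.1 hA h)
  · rw [delete_ground, rankSet_delete disjoint_sdiff_left, rankSet_ground_diff_singleton hco,
      rankSet_delete hAe]
  · have heA : e ∉ A := fun h ↦ hAe.notMem_of_mem_left h rfl
    rw [contract_ground, Finset.coe_insert, he.rankSet_insert heA, hground,
      Finset.card_insert_of_notMem heA, Nat.add_sub_add_right, Nat.add_sub_add_right]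

end Tutte

lemma tutteConvexOnLines_of_tutte_eq_add {β γ : Type*} [Fintype α] [Fintype β] [Fintype γ]
    {M : Matroid α} {N₁ : Matroid β} {N₂ : Matroid γ}
    (h : ∀ x y, M.tutte x y = N₁.tutte x y + N₂.tutte x y)
    (h₁ : N₁.TutteConvexOnLines) (h₂ : N₂.TutteConvexOnLines) : M.TutteConvexOnLines := by
  intro t x₁ y₁ x₂ y₂ ht ht₁ hx₁ hy₁ hx₂ hy₂ hsum
  simp only [h]
  linarith [h₁ t x₁ y₁ x₂ y₂ ht ht₁ hx₁ hy₁ hx₂ hy₂ hsum,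
    h₂ t x₁ y₁ x₂ y₂ ht ht₁ hx₁ hy₁ hx₂ hy₂ hsum]

end Matroid

theorem tutteConvexOnLines_of_delete_contract_general [Fintype α] (M : Matroid α) (e : α)
    (hloop : M.rankSet {e} ≠ 0)
    (hcoloop : ¬ (∀ B, M.IsBase B → e ∈ B))
    (hdel : (M.delElem e).TutteConvexOnLines)
    (hcon : (M.conElem e).TutteConvexOnLines) :
    M.TutteConvexOnLines := by
  have he : M.IsNonloop e := isNonloop_of_rankSet_singleton_ne_zero hloop
  have hco : ¬ M.IsColoop e := by rwa [isColoop_iff_forall_mem_isBase]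
  exact tutteConvexOnLines_of_tutte_eq_add (he.tutte_eq_tutte_delete_add_tutte_contract hco)
    (delElem_eq_delete M e ▸ hdel) (conElem_eq_contract M e ▸ hcon)

/-- If `e` is neither a loop nor a coloop of `M` and the Tutte polynomials of `M \ e` and
`M / e` are both convex along the portions of the lines `x + y = p` in the positive
quadrant, then so is the Tutte polynomial of `M`. -/
theorem tutteConvexOnLines_of_delete_contract [Fintype α] (M : Matroid α) (e : α)
    (he : e ∈ M.E)
    (hloop : M.rankSet {e} ≠ 0)
    (hcoloop : ¬ (∀ B, M.IsBase B → e ∈ B))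
    (hdel : (M.delElem e).TutteConvexOnLines)
    (hcon : (M.conElem e).TutteConvexOnLines) :
    M.TutteConvexOnLines :=
  tutteConvexOnLines_of_delete_contract_general M e hloop hcoloop hdel hcon
end

section
/- Let k ≥ 1 and l ≥ 0, and let M be the direct sum of the uniform matroid U_{1,k+1} and the uniform matroid U_{0,l} (that is, a rank-1 matroid on k+1 parallel elements together with l loops). Then T_M is convex along the portions of the lines x+y=p lying in the positive quadrant. -/
open Matroid Set

variable {α : Type*}

/-!
For a rank-one parallel class `P` of `k + 1` elements plus `l` loops, splitting a subset into its
parts in `P` and in the loops factors the Tutte polynomial as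
`T_M(x, y) = (x - 1 + 1 + y + ⋯ + y^k) · y^l`. Since `k ≥ 1`, on the line `x + y = p` this is
`p · y^l + y^(l+2) + ⋯ + y^(l+k)`, which for `p ≥ 0` is a sum of convex functions of `y ≥ 0`.
-/

namespace Finset

variable {β R : Type*}

theorem sum_powerset_union_of_disjoint [DecidableEq β] [AddCommMonoid R] {s t : Finset β}
    (h : Disjoint s t) (f : Finset β → R) :
    ∑ A ∈ (s ∪ t).powerset, f A = ∑ B ∈ s.powerset, ∑ C ∈ t.powerset, f (B ∪ C) := by
  induction t using Finset.induction_on generalizing f with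
  | empty => simp
  | @insert a t ha ih =>
    have hst : Disjoint s t := h.mono_right (subset_insert a t)
    have has : a ∉ s ∪ t := by
      simpa [ha] using disjoint_right.1 h (mem_insert_self a t)
    simp only [union_insert, sum_powerset_insert has, sum_powerset_insert ha, ih hst,
      sum_add_distrib]

theorem sum_powerset_pow_card [CommSemiring R] (s : Finset β) (z : R) :
    ∑ C ∈ s.powerset, z ^ C.card = (z + 1) ^ s.card := by
  simpa using sum_pow_mul_eq_add_pow z 1 s

theorem sum_powerset_ite_eq_empty [DecidableEq β] [CommSemiring R] (s : Finset β) (a z : R) :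
    ∑ B ∈ s.powerset, (if B = ∅ then a else z ^ (B.card - 1)) =
      a + ∑ i ∈ range s.card, (z + 1) ^ i := by
  induction s using Finset.induction_on with
  | empty => simp
  | @insert b s hb ih =>
    have hins : ∀ B ∈ s.powerset, (if insert b B = ∅ then a else z ^ ((insert b B).card - 1))
        = z ^ B.card := fun B hB => by
      rw [if_neg (insert_ne_empty b B),
        card_insert_of_notMem fun h => hb (mem_powerset.1 hB h), Nat.add_sub_cancel]
    rw [sum_powerset_insert hb, ih, sum_congr rfl hins, sum_powerset_pow_card,
      card_insert_of_notMem hb, sum_range_succ, add_assoc]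

end Finset

theorem ConvexOn.finset_sum {𝕜 E β ι : Type*} [Semiring 𝕜] [PartialOrder 𝕜] [AddCommMonoid E]
    [AddCommMonoid β] [PartialOrder β] [IsOrderedAddMonoid β] [SMul 𝕜 E] [Module 𝕜 β]
    [PosSMulMono 𝕜 β] {s : Set E} (hs : Convex 𝕜 s) (t : Finset ι) {f : ι → E → β}
    (hf : ∀ i ∈ t, ConvexOn 𝕜 s (f i)) : ConvexOn 𝕜 s fun x => ∑ i ∈ t, f i x := by
  simpa only [Finset.sum_fn] using
    Finset.sum_induction f (ConvexOn 𝕜 s) (fun _ _ => ConvexOn.add) (convexOn_const 0 hs) hf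

namespace Matroid

variable {M : Matroid α} {P L : Set α}

open Classical in
theorem rankSet_eq_ite (hIndep : ∀ I, M.Indep I ↔ I ⊆ P ∧ I.ncard ≤ 1) (A : Set α) :
    M.rankSet A = if (A ∩ P).Nonempty then 1 else 0 := by
  have hbdd : ∀ n ∈ {n | ∃ I ⊆ A, M.Indep I ∧ I.ncard = n}, n ≤ 1 := by
    rintro n ⟨I, -, hI, rfl⟩
    exact ((hIndep I).1 hI).2
  have hempty : 0 ∈ {n | ∃ I ⊆ A, M.Indep I ∧ I.ncard = n} :=
    ⟨∅, empty_subset A, (hIndep ∅).2 ⟨empty_subset P, by simp⟩, by simp⟩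
  unfold rankSet
  split_ifs with h
  · obtain ⟨a, haA, haP⟩ := h
    refine le_antisymm (csSup_le ⟨0, hempty⟩ hbdd) (le_csSup ⟨1, hbdd⟩ ?_)
    exact ⟨{a}, singleton_subset_iff.2 haA,
      (hIndep {a}).2 ⟨singleton_subset_iff.2 haP, by simp⟩, by simp⟩
  · refine Nat.eq_zero_of_le_zero (csSup_le ⟨0, hempty⟩ ?_)
    rintro n ⟨I, hIA, hI, rfl⟩
    have hIe : I = ∅ :=
      subset_empty_iff.1 (not_nonempty_iff_eq_empty.1 h ▸ subset_inter hIA ((hIndep I).1 hI).1)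
    simp [hIe]

theorem tutte_eq [Fintype α] (hIndep : ∀ I, M.Indep I ↔ I ⊆ P ∧ I.ncard ≤ 1)
    (hE : M.E = P ∪ L) (hPL : Disjoint P L) (hP : P.Nonempty) (x y : ℝ) :
    M.tutte x y = (x - 1 + ∑ i ∈ Finset.range P.ncard, y ^ i) * y ^ L.ncard := by
  classical
  set S := P.toFinite.toFinset
  set T := L.toFinite.toFinset
  have hST : Disjoint S T := by simpa [S, T] using hPL
  have hEST : M.E.toFinite.toFinset = S ∪ T := by ext; simp [S, T, hE]
  have hrE : M.rankSet M.E = 1 := by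
    rw [rankSet_eq_ite hIndep, hE, union_inter_cancel_left, if_pos hP]
  have hterm : ∀ B ∈ S.powerset, ∀ C ∈ T.powerset,
      (x - 1) ^ (1 - M.rankSet ↑(B ∪ C)) * (y - 1) ^ ((B ∪ C).card - M.rankSet ↑(B ∪ C)) =
        (if B = ∅ then x - 1 else (y - 1) ^ (B.card - 1)) * (y - 1) ^ C.card := by
    intro B hB C hC
    have hBP : (↑B : Set α) ⊆ P := by simpa [S] using Finset.mem_powerset.1 hB
    have hCL : (↑C : Set α) ⊆ L := by simpa [T] using Finset.mem_powerset.1 hC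
    have hinter : (↑(B ∪ C) : Set α) ∩ P = ↑B := by
      rw [Finset.coe_union, union_inter_distrib_right, inter_eq_left.2 hBP,
        (hPL.symm.mono_left hCL).inter_eq, union_empty]
    rw [rankSet_eq_ite hIndep, hinter, Finset.card_union_of_disjoint
      (hST.mono (Finset.mem_powerset.1 hB) (Finset.mem_powerset.1 hC))]
    rcases B.eq_empty_or_nonempty with rfl | hBne
    · simp
    · rw [if_pos (Finset.coe_nonempty.2 hBne), if_neg hBne.ne_empty,
        Nat.sub_add_comm hBne.card_pos, pow_add]
      simp
  unfold tutte
  rw [hEST, hrE, Finset.sum_powerset_union_of_disjoint hST,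
    Finset.sum_congr rfl fun B hB => Finset.sum_congr rfl (hterm B hB), ← Finset.sum_mul_sum,
    Finset.sum_powerset_ite_eq_empty, Finset.sum_powerset_pow_card,
    ncard_eq_toFinset_card P, ncard_eq_toFinset_card L, sub_add_cancel]

theorem tutteConvexOnLines_of_convexOn [Fintype α] (M : Matroid α) (g : ℝ → ℝ → ℝ)
    (hT : ∀ x y, M.tutte x y = g (x + y) y) (hg : ∀ p, 0 ≤ p → ConvexOn ℝ (Ici 0) (g p)) :
    M.TutteConvexOnLines := by
  intro t x₁ y₁ x₂ y₂ ht ht1 hx₁ hy₁ hx₂ hy₂ hsum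
  have hmid : t * x₁ + (1 - t) * x₂ + (t * y₁ + (1 - t) * y₂) = x₁ + y₁ := by
    linear_combination (t - 1) * hsum
  rw [hT, hT, hT, hmid, ← hsum]
  simpa only [smul_eq_mul] using (hg _ (by positivity)).2 (mem_Ici.2 hy₁) (mem_Ici.2 hy₂) ht
    (sub_nonneg.2 ht1) (add_sub_cancel t 1)

end Matroid

/-- If `M` is the direct sum of the uniform matroid `U_{1,k+1}` (with `k ≥ 1`) and the
uniform matroid `U_{0,l}` — i.e. a rank-1 matroid consisting of a parallel class `P` of
`k+1` elements together with a set `L` of `l` loops — then `T_M` is convex along the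
portions of the lines `x + y = p` lying in the positive quadrant. -/
theorem tutteConvexOnLines_parallel_class_plus_loops [Fintype α] (M : Matroid α)
    (k l : ℕ) (hk : 1 ≤ k) (P L : Set α)
    (hE : M.E = P ∪ L) (hPL : Disjoint P L)
    (hP : P.ncard = k + 1) (hL : L.ncard = l)
    (hIndep : ∀ I, M.Indep I ↔ I ⊆ P ∧ I.ncard ≤ 1) :
    M.TutteConvexOnLines := by
  obtain ⟨m, rfl⟩ : ∃ m, k = m + 1 := ⟨k - 1, by omega⟩
  have hPne : P.Nonempty := nonempty_of_ncard_ne_zero (by omega)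
  refine M.tutteConvexOnLines_of_convexOn
    (fun p y => p * y ^ l + ∑ i ∈ Finset.range m, y ^ (i + 2 + l)) (fun x y => ?_)
    (fun p hp => ?_)
  · rw [tutte_eq hIndep hE hPL hPne, hP, hL]
    simp only [Finset.sum_range_succ', add_mul, Finset.sum_mul, ← pow_add]
    ring_nf
  · exact ((convexOn_pow l).smul hp).add
      (ConvexOn.finset_sum (convex_Ici 0) _ fun i _ => convexOn_pow (i + 2 + l))
end

section
/- Let M be a uniform matroid U_{r,n} with 0 ≤ r ≤ n. Then the Tutte polynomial T_M, viewed as a real-valued function of (x,y), is a convex function on the positive quadrant {(x,y) : x ≥ 0, y ≥ 0}. -/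
open Matroid Set

variable {α : Type*}

lemma rankSet_uniform (M : Matroid α) (r : ℕ)
    (hIndep : ∀ I, M.Indep I ↔ I ⊆ M.E ∧ I.ncard ≤ r) (X : Set α) (hX : X ⊆ M.E)
    (hfin : X.Finite) : M.rankSet X = min X.ncard r := by
  unfold Matroid.rankSet
  have hset : {n | ∃ I ⊆ X, M.Indep I ∧ I.ncard = n} = Set.Iic (min X.ncard r) := by
    ext m
    simp only [Set.mem_setOf_eq, Set.mem_Iic, le_min_iff]
    constructor
    · rintro ⟨I, hIX, hind, rfl⟩
      rw [hIndep] at hind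
      exact ⟨Set.ncard_le_ncard hIX hfin, hind.2⟩
    · rintro ⟨h1, h2⟩
      obtain ⟨I, hIX, hcard⟩ := Set.exists_subset_card_eq h1
      exact ⟨I, hIX, (hIndep I).mpr ⟨hIX.trans hX, by omega⟩, hcard⟩
  rw [hset, csSup_Iic]

open Finset in
lemma flip_sum (y : ℝ) (n r : ℕ) (h : r ≤ n) :
    ∑ k ∈ Finset.Ico r (n+1), (n.choose k : ℝ) * (y-1)^(k-r)
      = ∑ k ∈ Finset.range (n-r+1), (n.choose k : ℝ) * (y-1)^(n-r-k) := by
  rw [Finset.range_eq_Ico]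
  apply Finset.sum_nbij' (fun k => n - k) (fun k => n - k)
  · intro a ha; simp only [Finset.mem_Ico] at *; omega
  · intro a ha; simp only [Finset.mem_Ico] at *; omega
  · intro a ha; simp only [Finset.mem_Ico] at ha; omega
  · intro a ha; simp only [Finset.mem_Ico] at ha; omega
  · intro a ha
    simp only [Finset.mem_Ico] at ha
    rw [Nat.choose_symm (by omega), show n-r-(n-a) = a-r from by omega]

open Finset in
lemma gsum_eq (x : ℝ) : ∀ n : ℕ, ∀ r : ℕ, r ≤ n →
    ∑ k ∈ Finset.range (r+1), (n.choose k : ℝ) * (x-1)^(r-k)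
      = ∑ j ∈ Finset.range (r+1), (((n-1-j).choose (r-j) : ℕ) : ℝ) * x^j := by
  intro n
  induction n with
  | zero =>
    intro r hr
    interval_cases r
    simp
  | succ n ih =>
    intro r hr
    rcases Nat.eq_or_lt_of_le hr with heq | hlt
    · subst heq
      have hb : ((x-1) + 1)^(n+1) = ∑ k ∈ range (n+2), (x-1)^k * 1^(n+1-k) * ((n+1).choose k : ℝ) := by
        exact_mod_cast add_pow (x-1) 1 (n+1)
      have hL : ∑ k ∈ Finset.range (n+2), ((n+1).choose k : ℝ) * (x-1)^(n+1-k) = x^(n+1) := by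
        calc ∑ k ∈ Finset.range (n+1+1), ((n+1).choose k : ℝ) * (x-1)^(n+1-k)
            = ∑ k ∈ Finset.range (n+1+1), ((n+1).choose (n+1-k) : ℝ) * (x-1)^(n+1-(n+1-k)) := by
              rw [← Finset.sum_range_reflect]
              apply Finset.sum_congr rfl
              intro k hk
              simp only [Finset.mem_range] at hk
              congr 2 <;> omega
          _ = ∑ k ∈ Finset.range (n+1+1), (x-1)^k * 1^(n+1-k) * ((n+1).choose k : ℝ) := by
              apply Finset.sum_congr rfl
              intro k hk
              simp only [Finset.mem_range] at hk
              rw [Nat.choose_symm (by omega), Nat.sub_sub_self (by omega)]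
              ring
          _ = ((x-1)+1)^(n+1) := hb.symm
          _ = x^(n+1) := by ring_nf
      rw [hL]
      rw [Finset.sum_range_succ]
      have h0 : ∀ j ∈ Finset.range (n+1), (((n+1-1-j).choose (n+1-j) : ℕ) : ℝ) * x^j = 0 := by
        intro j hj
        simp only [Finset.mem_range] at hj
        rw [Nat.choose_eq_zero_of_lt (by omega)]
        simp
      rw [Finset.sum_eq_zero h0]
      rw [show n+1-1-(n+1) = 0 from by omega, show n+1-(n+1) = 0 from by omega]
      simp
    · have hr' : r ≤ n := by omega
      cases r with
      | zero => simp
      | succ r =>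
        have h1 : r ≤ n := by omega
        have h2 : r + 1 ≤ n := by omega
        have e1 : ∑ k ∈ Finset.range (r+1+1), ((n+1).choose k : ℝ) * (x-1)^(r+1-k)
            = ∑ k ∈ Finset.range (r+1), ((n+1).choose (k+1) : ℝ) * (x-1)^(r-k) + (x-1)^(r+1) := by
          rw [Finset.sum_range_succ']
          simp
        have e2 : ∑ k ∈ Finset.range (r+1+1), (n.choose k : ℝ) * (x-1)^(r+1-k)
            = ∑ k ∈ Finset.range (r+1), (n.choose (k+1) : ℝ) * (x-1)^(r-k) + (x-1)^(r+1) := by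
          rw [Finset.sum_range_succ']
          simp
        have e3 : ∑ k ∈ Finset.range (r+1), ((n+1).choose (k+1) : ℝ) * (x-1)^(r-k)
            = ∑ k ∈ Finset.range (r+1), (n.choose k : ℝ) * (x-1)^(r-k)
              + ∑ k ∈ Finset.range (r+1), (n.choose (k+1) : ℝ) * (x-1)^(r-k) := by
          rw [← Finset.sum_add_distrib]
          apply Finset.sum_congr rfl
          intro k hk
          rw [Nat.choose_succ_succ']
          push_cast
          ring
        have hL : ∑ k ∈ Finset.range (r+1+1), ((n+1).choose k : ℝ) * (x-1)^(r+1-k)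
            = (∑ k ∈ Finset.range (r+1), (n.choose k : ℝ) * (x-1)^(r-k))
              + ∑ k ∈ Finset.range (r+1+1), (n.choose k : ℝ) * (x-1)^(r+1-k) := by
          rw [e1, e2, e3]; ring
        rw [hL, ih r h1, ih (r+1) h2]
        have eR1 : ∑ j ∈ Finset.range (r+1+1), (((n-1-j).choose (r+1-j) : ℕ) : ℝ) * x^j
            = ∑ j ∈ Finset.range (r+1), (((n-1-j).choose (r+1-j) : ℕ) : ℝ) * x^j + x^(r+1) := by
          rw [Finset.sum_range_succ, show r+1-(r+1) = 0 from by omega]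
          simp
        have eR2 : ∑ j ∈ Finset.range (r+1+1), (((n+1-1-j).choose (r+1-j) : ℕ) : ℝ) * x^j
            = ∑ j ∈ Finset.range (r+1), (((n-j).choose (r+1-j) : ℕ) : ℝ) * x^j + x^(r+1) := by
          rw [Finset.sum_range_succ, show r+1-(r+1) = 0 from by omega,
            show n+1-1-(r+1) = n-(r+1) from by omega]
          simp
        have eR3 : ∑ j ∈ Finset.range (r+1),
            ((((n-1-j).choose (r-j) : ℕ) : ℝ) * x^j + (((n-1-j).choose (r+1-j) : ℕ) : ℝ) * x^j)
            = ∑ j ∈ Finset.range (r+1), (((n-j).choose (r+1-j) : ℕ) : ℝ) * x^j := by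
          apply Finset.sum_congr rfl
          intro j hj
          simp only [Finset.mem_range] at hj
          rw [show n-j = (n-1-j)+1 from by omega, show r+1-j = (r-j)+1 from by omega,
            Nat.choose_succ_succ']
          push_cast
          ring
        rw [eR1, eR2, ← eR3, Finset.sum_add_distrib]
        ring

open Finset in
lemma tutte_eq_poly [Fintype α] (M : Matroid α) (r n : ℕ) (hrn : r ≤ n)
    (hn : M.E.ncard = n)
    (hIndep : ∀ I, M.Indep I ↔ I ⊆ M.E ∧ I.ncard ≤ r) (x y : ℝ) :
    M.tutte x y = (∑ j ∈ Finset.range (r+1), (((n-1-j).choose (r-j) : ℕ) : ℝ) * x^j)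
      + (∑ j ∈ Finset.range (n-r+1), (((n-1-j).choose (n-r-j) : ℕ) : ℝ) * y^j)
      - (n.choose r : ℝ) := by
  have hfinE : M.E.Finite := M.E.toFinite
  have hcard : M.E.toFinite.toFinset.card = n := by
    rw [← Set.ncard_eq_toFinset_card M.E M.E.toFinite, hn]
  have hrE : M.rankSet M.E = r := by
    rw [rankSet_uniform M r hIndep M.E subset_rfl hfinE, hn]
    omega
  have hrA : ∀ A ∈ M.E.toFinite.toFinset.powerset, M.rankSet ↑A = min A.card r := by
    intro A hA
    rw [Finset.mem_powerset] at hA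
    have hsub : (↑A : Set α) ⊆ M.E := by
      intro a ha
      exact (Set.Finite.mem_toFinset _).mp (hA ha)
    rw [rankSet_uniform M r hIndep ↑A hsub (A.finite_toSet), Set.ncard_coe_finset]
  have h1 : M.tutte x y = ∑ A ∈ M.E.toFinite.toFinset.powerset,
      (fun k => (x-1)^(r - min k r) * (y-1)^(k - min k r)) A.card := by
    unfold Matroid.tutte
    apply Finset.sum_congr rfl
    intro A hA
    rw [hrE, hrA A hA]
  rw [h1, Finset.sum_powerset_apply_card (f := fun k => (x-1)^(r - min k r) * (y-1)^(k - min k r)), hcard]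
  have h2 : ∑ m ∈ Finset.range (n+1),
      n.choose m • ((x-1)^(r - min m r) * (y-1)^(m - min m r))
      = ∑ m ∈ Finset.range (n+1),
        (n.choose m : ℝ) * ((x-1)^(r - min m r) * (y-1)^(m - min m r)) := by
    apply Finset.sum_congr rfl
    intro m hm
    rw [nsmul_eq_mul]
  rw [h2]
  have hsplit : (∑ k ∈ Finset.Ico 0 (r+1),
        (n.choose k : ℝ) * ((x-1)^(r - min k r) * (y-1)^(k - min k r)))
      + ∑ k ∈ Finset.Ico (r+1) (n+1),
        (n.choose k : ℝ) * ((x-1)^(r - min k r) * (y-1)^(k - min k r))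
      = ∑ k ∈ Finset.range (n+1),
        (n.choose k : ℝ) * ((x-1)^(r - min k r) * (y-1)^(k - min k r)) := by
    rw [Finset.range_eq_Ico]
    exact Finset.sum_Ico_consecutive _ (by omega) (by omega)
  rw [← hsplit]
  have hS1 : ∑ k ∈ Finset.Ico 0 (r+1),
      (n.choose k : ℝ) * ((x-1)^(r - min k r) * (y-1)^(k - min k r))
      = ∑ k ∈ Finset.range (r+1), (n.choose k : ℝ) * (x-1)^(r-k) := by
    rw [Finset.range_eq_Ico]
    apply Finset.sum_congr rfl
    intro k hk
    simp only [Finset.mem_Ico] at hk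
    rw [show min k r = k from by omega, show k - k = 0 from by omega]
    ring
  have hS2 : ∑ k ∈ Finset.Ico (r+1) (n+1),
      (n.choose k : ℝ) * ((x-1)^(r - min k r) * (y-1)^(k - min k r))
      = ∑ k ∈ Finset.Ico (r+1) (n+1), (n.choose k : ℝ) * (y-1)^(k-r) := by
    apply Finset.sum_congr rfl
    intro k hk
    simp only [Finset.mem_Ico] at hk
    rw [show min k r = r from by omega, show r - r = 0 from by omega]
    ring
  have hS3 : ∑ k ∈ Finset.Ico r (n+1), (n.choose k : ℝ) * (y-1)^(k-r)
      = (n.choose r : ℝ) + ∑ k ∈ Finset.Ico (r+1) (n+1), (n.choose k : ℝ) * (y-1)^(k-r) := by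
    rw [Finset.sum_eq_sum_Ico_succ_bot (by omega : r < n+1)]
    rw [show r - r = 0 from by omega]
    ring_nf
  have hS4 : ∑ k ∈ Finset.Ico (r+1) (n+1), (n.choose k : ℝ) * (y-1)^(k-r)
      = (∑ j ∈ Finset.range (n-r+1), (((n-1-j).choose (n-r-j) : ℕ) : ℝ) * y^j)
        - (n.choose r : ℝ) := by
    have := flip_sum y n r hrn
    rw [hS3] at this
    rw [gsum_eq y n (n-r) (by omega)] at this
    linarith
  rw [hS1, hS2, hS4, gsum_eq x n r hrn]
  ring

open Finset in
lemma poly_conv (c : ℕ → ℕ) (m : ℕ) {t x₁ x₂ : ℝ} (ht : 0 ≤ t) (ht1 : t ≤ 1)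
    (h1 : 0 ≤ x₁) (h2 : 0 ≤ x₂) :
    ∑ j ∈ Finset.range m, (c j : ℝ) * (t*x₁+(1-t)*x₂)^j
      ≤ t * ∑ j ∈ Finset.range m, (c j : ℝ)*x₁^j
        + (1-t) * ∑ j ∈ Finset.range m, (c j : ℝ)*x₂^j := by
  rw [Finset.mul_sum, Finset.mul_sum, ← Finset.sum_add_distrib]
  apply Finset.sum_le_sum
  intro j _
  have hc := (convexOn_pow (𝕜 := ℝ) j).2 (Set.mem_Ici.mpr h1)
    (Set.mem_Ici.mpr h2) ht (by linarith : (0:ℝ) ≤ 1 - t) (by ring : t + (1 - t) = 1)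
  simp only [smul_eq_mul] at hc
  nlinarith [Nat.cast_nonneg (α := ℝ) (c j), hc]

/-- The Tutte polynomial of a uniform matroid `U_{r,n}` is a convex function on the
positive quadrant. -/
theorem tutte_convexOn_of_uniform [Fintype α] (M : Matroid α) (r n : ℕ) (hrn : r ≤ n)
    (hn : M.E.ncard = n)
    (hIndep : ∀ I, M.Indep I ↔ I ⊆ M.E ∧ I.ncard ≤ r) :
    ∀ t x₁ y₁ x₂ y₂ : ℝ, 0 ≤ t → t ≤ 1 → 0 ≤ x₁ → 0 ≤ y₁ → 0 ≤ x₂ → 0 ≤ y₂ →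
      M.tutte (t * x₁ + (1 - t) * x₂) (t * y₁ + (1 - t) * y₂) ≤
        t * M.tutte x₁ y₁ + (1 - t) * M.tutte x₂ y₂ := by
  intro t x₁ y₁ x₂ y₂ ht ht1 hx₁ hy₁ hx₂ hy₂
  rw [tutte_eq_poly M r n hrn hn hIndep, tutte_eq_poly M r n hrn hn hIndep,
    tutte_eq_poly M r n hrn hn hIndep]
  have hx := poly_conv (fun j => (n-1-j).choose (r-j)) (r+1) ht ht1 hx₁ hx₂
  have hy := poly_conv (fun j => (n-1-j).choose (n-r-j)) (n-r+1) ht ht1 hy₁ hy₂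
  nlinarith [hx, hy]
end

section
/- Let M be a rank-2 matroid on a finite ground set with no loops and no coloops. Then T_M is convex along the portions of the lines x+y=p lying in the positive quadrant. -/
open Matroid Set

variable {α : Type*}

/-!
In a loopless matroid of rank two, the rank of a set `A` is `0`, `1` or `2` according as `A` is
empty, a nonempty subset of a parallel class, or neither. So on the line `x + y = c + 1` the Tutte
polynomial is the polynomial `(c - y)² + (c - y) S(y) + R(y)` in `y`, where
`S = Σ_{r(A)=1} (y - 1)^{|A|-1} = Σ_Q (1 + y + ⋯ + y^{|Q|-1})` over the parallel classes `Q`, and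
`(y - 1) R = (1 + y + ⋯ + y^{|E|-1}) - S`. For `x = c + 1 - y ≥ 0` and `y ≥ 0` its second
derivative is at least `2 - 2S' - S'' + R''`, because `S''` has nonnegative coefficients. The
coefficients of `2 - 2S' - S'' + R''` are nonnegative as well: this is an inequality between the
class sizes, and it needs that no class misses fewer than two elements of `E`, which is what the
absence of coloops gives.
-/

open Polynomial Finset

namespace Polynomial

lemma eval_nonneg_of_coeff_nonneg {R : Type*} [CommSemiring R] [PartialOrder R] [IsOrderedRing R]
    {p : R[X]} (hp : ∀ n, 0 ≤ p.coeff n) {y : R} (hy : 0 ≤ y) : 0 ≤ p.eval y := by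
  rw [eval_eq_sum_range]
  exact sum_nonneg fun n _ => mul_nonneg (hp n) (pow_nonneg hy n)

lemma coeff_eq_neg_sum_of_X_sub_one_mul {R : Type*} [CommRing R] {q f : R[X]}
    (h : (X - 1) * q = f) (t : ℕ) : q.coeff t = -∑ j ∈ range (t + 1), f.coeff j := by
  induction t with
  | zero => simp [← h, sub_mul]
  | succ t ih =>
    have hf : (q * (X - C 1)).coeff (t + 1) = f.coeff (t + 1) := by rw [← h, C_1, mul_comm]
    rw [coeff_mul_X_sub_C, mul_one] at hf
    rw [sum_range_succ, neg_add, ← ih, ← hf]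
    ring

lemma coeff_geom_sum {R : Type*} [Semiring R] (n j : ℕ) :
    (∑ i ∈ range n, X ^ i : R[X]).coeff j = if j < n then 1 else 0 := by
  simp [coeff_X_pow]

lemma convexOn_eval_of_derivative_derivative_nonneg {p : ℝ[X]} {D : Set ℝ} (hD : Convex ℝ D)
    (h : ∀ y ∈ interior D, 0 ≤ (derivative (derivative p)).eval y) :
    ConvexOn ℝ D fun y => p.eval y := by
  have hderiv : ∀ q : ℝ[X], _root_.deriv (fun y => q.eval y) = fun y => (derivative q).eval y :=
    fun q => by ext y; exact q.deriv
  refine convexOn_of_deriv2_nonneg hD p.continuous.continuousOn p.differentiable.differentiableOn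
    ?_ ?_
  · rw [hderiv]; exact (derivative p).differentiable.differentiableOn
  · simpa [hderiv] using h

end Polynomial

lemma card_range_filter_lt (a n : ℕ) : #{j ∈ range n | j < a} = min a n := by
  rw [← card_range (min a n)]
  congr 1
  ext j
  simp only [Finset.mem_filter, Finset.mem_range]
  omega

section PartSizes

variable {ι : Type*} (s : Finset ι) (n : ι → ℕ) (t : ℕ)

lemma mul_card_le_sum_min : (t + 2) * #{i ∈ s | t + 2 ≤ n i} ≤ ∑ i ∈ s, min (n i) (t + 2) :=
  calc (t + 2) * #{i ∈ s | t + 2 ≤ n i}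
      = ∑ i ∈ s with t + 2 ≤ n i, min (n i) (t + 2) := by
        rw [sum_congr rfl fun i hi => min_eq_right (mem_filter.1 hi).2, sum_const, smul_eq_mul,
          mul_comm]
    _ ≤ ∑ i ∈ s, min (n i) (t + 2) := sum_le_sum_of_subset (filter_subset _ s)

lemma sum_min_eq_sum_of_card_eq_zero (h : #{i ∈ s | t + 2 ≤ n i} = 0) :
    ∑ i ∈ s, min (n i) (t + 2) = ∑ i ∈ s, n i := by
  rw [card_eq_zero, filter_eq_empty_iff] at h
  exact sum_congr rfl fun i hi => min_eq_left (by have := h hi; omega)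

lemma add_four_le_sum_min_of_card_eq_one [DecidableEq ι]
    (hsize : ∀ i ∈ s, n i + 2 ≤ ∑ j ∈ s, n j) (h : #{i ∈ s | t + 2 ≤ n i} = 1) :
    t + 4 ≤ ∑ i ∈ s, min (n i) (t + 2) := by
  obtain ⟨i₀, hi₀⟩ := card_eq_one.1 h
  have hmem : ∀ i, i ∈ s ∧ t + 2 ≤ n i ↔ i = i₀ := fun i => by
    rw [← Finset.mem_singleton, ← hi₀, mem_filter]
  obtain ⟨hi₀s, hbig⟩ := (hmem i₀).2 rfl
  have hsmall : ∀ i ∈ s.erase i₀, min (n i) (t + 2) = n i := fun i hi => by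
    obtain ⟨hne, his⟩ := Finset.mem_erase.1 hi
    have := mt (hmem i).1 hne
    exact min_eq_left (by simp only [his, true_and, not_le] at this; omega)
  have hmin : ∑ i ∈ s, min (n i) (t + 2) = (t + 2) + ∑ i ∈ s.erase i₀, n i := by
    rw [← add_sum_erase s _ hi₀s, sum_congr rfl hsmall, min_eq_right hbig]
  have hrest := hsize i₀ hi₀s
  rw [← add_sum_erase s _ hi₀s] at hrest
  omega

lemma two_mul_card_le_sum_min_sub_min (hsize : ∀ i ∈ s, n i + 2 ≤ ∑ j ∈ s, n j) :
    2 * (t + 1) * (#{i ∈ s | t + 2 ≤ n i} : ℝ) ≤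
      (t + 1) * (t + 2) * ((∑ i ∈ s, min (n i) (t + 2) : ℕ) - (min (∑ i ∈ s, n i) (t + 3) : ℕ))
        + if t = 0 then 2 else 0 := by
  classical
  have hσ := mul_card_le_sum_min s n t
  have hμ : min (∑ i ∈ s, n i) (t + 3) ≤ t + 3 := min_le_right _ _
  have h0 : #{i ∈ s | t + 2 ≤ n i} = 0 →
      min (∑ i ∈ s, n i) (t + 3) ≤ ∑ i ∈ s, min (n i) (t + 2) :=
    fun hK => (sum_min_eq_sum_of_card_eq_zero s n t hK).symm ▸ min_le_left _ _
  have h1 := add_four_le_sum_min_of_card_eq_one s n t hsize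
  generalize #{i ∈ s | t + 2 ≤ n i} = K at *
  generalize ∑ i ∈ s, min (n i) (t + 2) = σ at *
  generalize min (∑ i ∈ s, n i) (t + 3) = μ at *
  have hite : (0 : ℝ) ≤ if t = 0 then 2 else 0 := by split_ifs <;> norm_num
  have htt : (0 : ℝ) ≤ (t + 1) * (t + 2) := by positivity
  have hμ' : (μ : ℝ) ≤ t + 3 := by exact_mod_cast hμ
  obtain rfl | rfl | hK : K = 0 ∨ K = 1 ∨ 2 ≤ K := by omega
  · have hμσ : (μ : ℝ) ≤ σ := by exact_mod_cast h0 rfl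
    rw [Nat.cast_zero, mul_zero]
    nlinarith [mul_nonneg htt (sub_nonneg.2 hμσ)]
  · have h4 : (t : ℝ) + 4 ≤ σ := by exact_mod_cast h1 rfl
    rw [Nat.cast_one]
    nlinarith [mul_le_mul_of_nonneg_left (by linarith : (1 : ℝ) ≤ σ - μ) htt]
  · have hσ' : ((t : ℝ) + 2) * K ≤ σ := by exact_mod_cast hσ
    have hK' : (2 : ℝ) ≤ K := by exact_mod_cast hK
    rcases Nat.eq_zero_or_pos t with ht | ht
    · have ht0 : (t : ℝ) = 0 := by exact_mod_cast ht
      rw [if_pos ht, ht0]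
      rw [ht0] at hσ' hμ'
      linarith
    · have ht1 : (1 : ℝ) ≤ t := by exact_mod_cast ht
      rw [if_neg ht.ne', add_zero]
      have hinner : 0 ≤ K * (((t : ℝ) + 2) ^ 2 - 2) - (t + 2) * (t + 3) := by
        nlinarith [mul_le_mul_of_nonneg_right hK' (by nlinarith : (0 : ℝ) ≤ (t + 2) ^ 2 - 2)]
      nlinarith [mul_le_mul_of_nonneg_left (by linarith : (t + 2) * (K : ℝ) - (t + 3) ≤ σ - μ)
        htt, mul_nonneg (by positivity : (0 : ℝ) ≤ t + 1) hinner]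

end PartSizes

namespace Finpartition

variable [DecidableEq α] {s : Finset α} (P : Finpartition s) {A : Finset α}

def parallelRk (A : Finset α) : ℕ :=
  if A = ∅ then 0 else if ∃ Q ∈ P.parts, A ⊆ Q then 1 else 2

lemma parallelRk_le_two (A : Finset α) : P.parallelRk A ≤ 2 := by
  unfold parallelRk; split_ifs <;> omega

lemma parallelRk_eq_zero_iff : P.parallelRk A = 0 ↔ A = ∅ := by
  unfold parallelRk; split_ifs <;> simp_all

lemma parallelRk_eq_one_iff : P.parallelRk A = 1 ↔ A ≠ ∅ ∧ ∃ Q ∈ P.parts, A ⊆ Q := by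
  unfold parallelRk; split_ifs <;> simp_all

lemma parallelRk_le_card (hA : A ⊆ s) : P.parallelRk A ≤ #A := by
  unfold parallelRk
  split_ifs with h0 h1
  · exact Nat.zero_le _
  · exact card_pos.2 (nonempty_iff_ne_empty.2 h0)
  · obtain ⟨a, ha⟩ := nonempty_iff_ne_empty.2 h0
    by_contra! hcard
    have hA1 : A = {a} :=
      eq_singleton_iff_unique_mem.2 ⟨ha, fun b hb => card_le_one.1 (by omega) b hb a ha⟩
    exact h1 ⟨P.part a, P.part_mem.2 (hA ha), hA1 ▸ singleton_subset_iff.2 (P.mem_part (hA ha))⟩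

lemma sum_powerset_eq_sum_parallelRk {β : Type*} [AddCommMonoid β] (f : Finset α → β) :
    ∑ A ∈ s.powerset, f A = f ∅ + ∑ A ∈ s.powerset with P.parallelRk A = 1, f A
      + ∑ A ∈ s.powerset with P.parallelRk A = 2, f A := by
  rw [← sum_fiberwise_of_maps_to (g := P.parallelRk) (t := range 3)
    fun A _ => mem_range.2 (Nat.lt_succ_of_le (P.parallelRk_le_two A))]
  have hzero : {A ∈ s.powerset | P.parallelRk A = 0} = {∅} := by
    ext A
    rw [mem_filter, parallelRk_eq_zero_iff, Finset.mem_singleton, and_iff_right_iff_imp]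
    rintro rfl
    exact empty_mem_powerset s
  simp [sum_range_succ, hzero]

lemma sum_parallelRk_eq_one {β : Type*} [AddCommMonoid β] (f : Finset α → β) :
    ∑ A ∈ s.powerset with P.parallelRk A = 1, f A =
      ∑ Q ∈ P.parts, ∑ A ∈ Q.powerset.erase ∅, f A := by
  have hfilter : {A ∈ s.powerset | P.parallelRk A = 1} = P.parts.biUnion (·.powerset.erase ∅) := by
    ext A
    simp only [mem_filter, Finset.mem_powerset, parallelRk_eq_one_iff, Finset.mem_biUnion,
      Finset.mem_erase]
    constructor
    · rintro ⟨-, hA, Q, hQ, hAQ⟩; exact ⟨Q, hQ, hA, hAQ⟩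
    · rintro ⟨Q, hQ, hA, hAQ⟩; exact ⟨hAQ.trans (P.le hQ), hA, Q, hQ, hAQ⟩
  rw [hfilter, sum_biUnion]
  intro Q hQ R hR hQR
  simp only [Function.onFun, Finset.disjoint_left, Finset.mem_erase, Finset.mem_powerset]
  rintro A ⟨hA, hAQ⟩ ⟨-, hAR⟩
  obtain ⟨a, ha⟩ := nonempty_iff_ne_empty.2 hA
  exact hQR (P.eq_of_mem_parts hQ hR (hAQ ha) (hAR ha))

noncomputable def nullityPoly (k : ℕ) : ℝ[X] :=
  ∑ A ∈ s.powerset with P.parallelRk A = k, (X - 1) ^ (#A - k)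

lemma X_sub_one_pow_mul_nullityPoly (k : ℕ) :
    (X - 1) ^ k * P.nullityPoly k = ∑ A ∈ s.powerset with P.parallelRk A = k, (X - 1) ^ #A := by
  rw [nullityPoly, mul_sum]
  refine sum_congr rfl fun A hA => ?_
  obtain ⟨hAs, hk⟩ := mem_filter.1 hA
  rw [← pow_add, Nat.add_sub_cancel' (hk ▸ P.parallelRk_le_card (Finset.mem_powerset.1 hAs))]

lemma X_sub_one_mul_nullityPoly_one :
    (X - 1) * P.nullityPoly 1 = ∑ Q ∈ P.parts, (X ^ #Q - 1) := by
  rw [← pow_one (X - 1), X_sub_one_pow_mul_nullityPoly, sum_parallelRk_eq_one]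
  refine sum_congr rfl fun Q _ => ?_
  have h := sum_pow_mul_eq_add_pow (X - 1 : ℝ[X]) 1 Q
  simp only [one_pow, mul_one, sub_add_cancel] at h
  rw [sum_erase_eq_sub (empty_mem_powerset Q), h, Finset.card_empty, pow_zero]

lemma nullityPoly_one_eq : P.nullityPoly 1 = ∑ Q ∈ P.parts, ∑ j ∈ range #Q, X ^ j := by
  refine mul_left_cancel₀ (X_sub_C_ne_zero (1 : ℝ)) ?_
  rw [C_1, X_sub_one_mul_nullityPoly_one, mul_sum]
  exact sum_congr rfl fun Q _ => (mul_geom_sum X #Q).symm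

lemma X_sub_one_mul_nullityPoly_two :
    (X - 1) * P.nullityPoly 2 = ∑ j ∈ range #s, X ^ j - P.nullityPoly 1 := by
  refine mul_left_cancel₀ (X_sub_C_ne_zero (1 : ℝ)) ?_
  have h := P.sum_powerset_eq_sum_parallelRk fun A => (X - 1 : ℝ[X]) ^ #A
  have htotal := sum_pow_mul_eq_add_pow (X - 1 : ℝ[X]) 1 s
  simp only [one_pow, mul_one, sub_add_cancel] at htotal
  rw [htotal, Finset.card_empty, pow_zero, ← P.X_sub_one_pow_mul_nullityPoly 2,
    ← P.X_sub_one_pow_mul_nullityPoly 1] at h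
  rw [C_1, ← mul_assoc, ← sq, mul_sub, mul_geom_sum]
  linear_combination -h

lemma coeff_nullityPoly_one (j : ℕ) : (P.nullityPoly 1).coeff j = #{Q ∈ P.parts | j < #Q} := by
  simp [nullityPoly_one_eq, finsetSum_coeff]

lemma coeff_nullityPoly_two (t : ℕ) :
    (P.nullityPoly 2).coeff t = (∑ Q ∈ P.parts, min #Q (t + 1) : ℕ) - (min #s (t + 1) : ℕ) := by
  rw [coeff_eq_neg_sum_of_X_sub_one_mul P.X_sub_one_mul_nullityPoly_two]
  simp only [coeff_sub, coeff_geom_sum, coeff_nullityPoly_one, sum_sub_distrib, sum_boole,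
    card_range_filter_lt]
  have hswap : ∑ j ∈ range (t + 1), #{Q ∈ P.parts | j < #Q} = ∑ Q ∈ P.parts, min #Q (t + 1) := by
    simp only [card_filter]
    rw [sum_comm]
    exact sum_congr rfl fun Q _ => by rw [← card_filter, card_range_filter_lt]
  rw [← hswap]
  push_cast
  ring

lemma coeff_two_sub_derivative_nullityPoly_nonneg (hsize : ∀ Q ∈ P.parts, #Q + 2 ≤ #s) (t : ℕ) :
    0 ≤ (C 2 - 2 * derivative (P.nullityPoly 1) - derivative (derivative (P.nullityPoly 1))
      + derivative (derivative (P.nullityPoly 2))).coeff t := by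
  have hmin : ∑ Q ∈ P.parts, min #Q (t + 3) =
      ∑ Q ∈ P.parts, min #Q (t + 2) + #{Q ∈ P.parts | t + 2 < #Q} := by
    rw [card_filter, ← sum_add_distrib]
    exact sum_congr rfl fun Q _ => by split_ifs <;> omega
  have hsucc : ∀ Q : Finset α, t + 1 < #Q ↔ t + 2 ≤ #Q := fun Q => Iff.rfl
  have key := two_mul_card_le_sum_min_sub_min P.parts card t (by rwa [P.sum_card_parts])
  rw [P.sum_card_parts] at key
  simp only [coeff_add, coeff_sub, coeff_C, coeff_derivative, coeff_ofNat_mul,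
    coeff_nullityPoly_one, coeff_nullityPoly_two, add_assoc, Nat.reduceAdd, hmin, hsucc]
  push_cast at key ⊢
  split_ifs at key ⊢ <;> linarith

noncomputable def tutteOnLine (c : ℝ) : ℝ[X] :=
  ∑ A ∈ s.powerset, (C c - X) ^ (2 - P.parallelRk A) * (X - 1) ^ (#A - P.parallelRk A)

lemma tutteOnLine_eq (c : ℝ) :
    P.tutteOnLine c = (C c - X) ^ 2 + (C c - X) * P.nullityPoly 1 + P.nullityPoly 2 := by
  have hrk : ∀ k, ∀ A ∈ {A ∈ s.powerset | P.parallelRk A = k},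
      (C c - X) ^ (2 - P.parallelRk A) * (X - 1) ^ (#A - P.parallelRk A) =
        (C c - X) ^ (2 - k) * (X - 1) ^ (#A - k) :=
    fun k A hA => by rw [(mem_filter.1 hA).2]
  rw [tutteOnLine, sum_powerset_eq_sum_parallelRk, sum_congr rfl (hrk 1), sum_congr rfl (hrk 2),
    nullityPoly, nullityPoly, mul_sum, (P.parallelRk_eq_zero_iff).2 rfl]
  simp

lemma derivative_derivative_tutteOnLine (c : ℝ) :
    derivative (derivative (P.tutteOnLine c)) =
      C 2 - 2 * derivative (P.nullityPoly 1) - derivative (derivative (P.nullityPoly 1))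
        + derivative (derivative (P.nullityPoly 2))
        + (C (c + 1) - X) * derivative (derivative (P.nullityPoly 1)) := by
  simp only [tutteOnLine_eq, derivative_mul, derivative_sub, derivative_C, derivative_X,
    derivative_sq, derivative_one, map_add, map_zero, C_1]
  ring

lemma convexOn_tutteOnLine (hsize : ∀ Q ∈ P.parts, #Q + 2 ≤ #s) (c : ℝ) :
    ConvexOn ℝ (Set.Icc 0 (c + 1)) fun y => (P.tutteOnLine c).eval y := by
  refine convexOn_eval_of_derivative_derivative_nonneg (convex_Icc _ _) fun y hy => ?_
  rw [interior_Icc] at hy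
  have hS : 0 ≤ (derivative (derivative (P.nullityPoly 1))).eval y :=
    eval_nonneg_of_coeff_nonneg (fun t => by
      simp only [coeff_derivative, coeff_nullityPoly_one]; positivity) hy.1.le
  have hD :=
    eval_nonneg_of_coeff_nonneg (P.coeff_two_sub_derivative_nullityPoly_nonneg hsize) hy.1.le
  rw [derivative_derivative_tutteOnLine, eval_add, eval_mul]
  simp only [eval_sub, eval_C, eval_X] at hD ⊢
  nlinarith [mul_nonneg (by linarith [hy.2] : 0 ≤ c + 1 - y) hS]

end Finpartition

namespace Matroid

variable {M : Matroid α}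

lemma rankSet_eq_eRk [Finite α] (M : Matroid α) (X : Set α) : (M.rankSet X : ℕ∞) = M.eRk X := by
  obtain ⟨I, hI⟩ := M.exists_isBasis' X
  have hmax : IsGreatest {n | ∃ J ⊆ X, M.Indep J ∧ J.ncard = n} I.ncard := by
    refine ⟨⟨I, hI.subset, hI.indep, rfl⟩, ?_⟩
    rintro _ ⟨J, hJX, hJ, rfl⟩
    have := (hJ.encard_le_eRk_of_subset hJX).trans_eq hI.eRk_eq_encard
    rwa [← J.toFinite.cast_ncard_eq, ← I.toFinite.cast_ncard_eq, Nat.cast_le] at this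
  rw [rankSet, hmax.csSup_eq, I.toFinite.cast_ncard_eq, hI.eRk_eq_encard]

lemma loopless_of_rankSet_singleton_ne_zero [Finite α] (h : ∀ e ∈ M.E, M.rankSet {e} ≠ 0) :
    M.Loopless :=
  loopless_iff_forall_not_isLoop.2 fun e he hloop =>
    h e he (by exact_mod_cast (M.rankSet_eq_eRk {e}).trans hloop.eRk_eq)

variable [DecidableEq α]

noncomputable def parallelClasses [Finite α] (M : Matroid α) : Finpartition M.E.toFinite.toFinset :=
  @Finpartition.ofSetSetoid _ _ (Setoid.ker fun e => M.closure {e}) _ (Classical.decRel _)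

lemma mem_part_parallelClasses_iff [Finite α] {a b : α} :
    b ∈ M.parallelClasses.part a ↔ a ∈ M.E ∧ b ∈ M.E ∧ M.closure {a} = M.closure {b} := by
  rw [parallelClasses, Finpartition.mem_part_ofSetSetoid_iff_rel, Set.Finite.mem_toFinset,
    Set.Finite.mem_toFinset]
  rfl

lemma subset_part_parallelClasses_iff [Finite α] [M.Loopless] {A : Finset α} (hA : ↑A ⊆ M.E)
    {a : α} (ha : a ∈ M.E) : A ⊆ M.parallelClasses.part a ↔ ↑A ⊆ M.closure {a} := by
  refine ⟨fun h b hb => ?_, fun h b hb => ?_⟩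
  · obtain ⟨-, hbE, hab⟩ := mem_part_parallelClasses_iff.1 (h hb)
    exact hab ▸ M.mem_closure_self b hbE
  · exact mem_part_parallelClasses_iff.2 ⟨ha, hA hb,
      ((M.isNonloop_of_loopless (hA hb)).closure_eq_of_mem_closure (h hb)).symm⟩

lemma rankSet_eq_parallelRk [Finite α] [M.Loopless] (h2 : M.eRank = 2) {A : Finset α}
    (hA : ↑A ⊆ M.E) :
    M.rankSet ↑A = M.parallelClasses.parallelRk A := by
  have hsub : ∀ a ∈ A, A ⊆ M.parallelClasses.part a ↔ ↑A ⊆ M.closure {a} := fun a ha =>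
    subset_part_parallelClasses_iff hA (hA ha)
  apply Nat.cast_injective (R := ℕ∞)
  rw [rankSet_eq_eRk, Finpartition.parallelRk]
  split_ifs with h0 h1
  · simp [h0]
  · obtain ⟨a, ha⟩ := Finset.nonempty_iff_ne_empty.2 h0
    obtain ⟨Q, hQ, hAQ⟩ := h1
    rw [← M.parallelClasses.part_eq_of_mem hQ (hAQ ha), hsub a ha] at hAQ
    exact (eRk_eq_one_iff hA).2 ⟨a, ha, M.isNonloop_of_loopless (hA ha), hAQ⟩
  · have hle : M.eRk A ≤ 2 := h2 ▸ M.eRk_le_eRank A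
    have hne0 : M.eRk A ≠ 0 := by
      obtain ⟨a, ha⟩ := Finset.nonempty_iff_ne_empty.2 h0
      rw [ne_eq, eRk_eq_zero_iff hA, M.loops_eq_empty, Set.subset_empty_iff]
      exact Set.nonempty_iff_ne_empty.1 ⟨a, ha⟩
    have hne1 : M.eRk A ≠ 1 := fun h => by
      obtain ⟨a, ha, -, hAa⟩ := (eRk_eq_one_iff hA).1 h
      exact h1 ⟨_, M.parallelClasses.part_mem.2 (Set.Finite.mem_toFinset _ |>.2 (hA ha)),
        (hsub a ha).2 hAa⟩
    obtain ⟨n, hn⟩ := ENat.ne_top_iff_exists.1 (hle.trans_lt (by decide)).ne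
    rw [← hn] at hle hne0 hne1 ⊢
    norm_cast at hle hne0 hne1 ⊢
    omega

lemma card_add_two_le_of_mem_parallelClasses [Finite α] [M.Loopless] (h2 : M.eRank = 2)
    (hcoloop : ∀ e ∈ M.E, ¬ ∀ B, M.IsBase B → e ∈ B) {Q : Finset α}
    (hQ : Q ∈ M.parallelClasses.parts) : #Q + 2 ≤ #M.E.toFinite.toFinset := by
  set E' := M.E.toFinite.toFinset
  have hQE : Q ⊆ E' := M.parallelClasses.le hQ
  have hQE' : ↑Q ⊆ M.E := fun b hb => (Set.Finite.mem_toFinset _).1 (hQE hb)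
  obtain ⟨a, ha⟩ := M.parallelClasses.nonempty_of_mem_parts hQ
  by_contra! hcard
  have hrest : #(E' \ Q) ≤ 1 := by rw [card_sdiff_of_subset hQE]; omega
  have hBQ : ∀ B, M.IsBase B → (∀ w ∈ E' \ Q, w ∉ B) → B ⊆ ↑Q := fun B hB h b hb => by
    by_contra hbQ
    exact h b (Finset.mem_sdiff.2 ⟨(Set.Finite.mem_toFinset _).2 (hB.subset_ground hb), hbQ⟩) hb
  obtain ⟨B, hB, hBsub⟩ : ∃ B, M.IsBase B ∧ B ⊆ ↑Q := by
    rcases (E' \ Q).eq_empty_or_nonempty with hempty | ⟨w, hw⟩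
    · obtain ⟨B, hB⟩ := M.exists_isBase
      exact ⟨B, hB, hBQ B hB (by simp [hempty])⟩
    · have hwE := (Set.Finite.mem_toFinset _).1 (Finset.mem_sdiff.1 hw).1
      obtain ⟨B, hB, hwB⟩ : ∃ B, M.IsBase B ∧ w ∉ B := by simpa using hcoloop w hwE
      exact ⟨B, hB, hBQ B hB fun v hv => Finset.card_le_one.1 hrest v hv w hw ▸ hwB⟩
  have hQa : ↑Q ⊆ M.closure {a} :=
    (subset_part_parallelClasses_iff hQE' (hQE' ha)).1 (M.parallelClasses.part_eq_of_mem hQ ha).ge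
  have hrk := (M.eRk_mono (hBsub.trans hQa)).trans_eq (M.eRk_closure_eq {a})
  rw [hB.eRk_eq_eRank, h2] at hrk
  exact absurd (hrk.trans (M.eRk_singleton_le a)) (by decide)

lemma tutte_eq_eval_tutteOnLine [Fintype α] [M.Loopless] (hrk : M.rankSet M.E = 2) (x y : ℝ) :
    M.tutte x y = (M.parallelClasses.tutteOnLine (x + y - 1)).eval y := by
  have h2 : M.eRank = 2 := by rw [← eRk_ground, ← rankSet_eq_eRk, hrk]; rfl
  rw [tutte, Finpartition.tutteOnLine, eval_finsetSum, hrk]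
  refine Finset.sum_congr rfl fun A hA => ?_
  rw [rankSet_eq_parallelRk h2 fun a ha =>
    (Set.Finite.mem_toFinset _).1 (Finset.mem_powerset.1 hA ha)]
  simp only [eval_mul, eval_pow, eval_sub, eval_C, eval_X, eval_one]
  ring

end Matroid

/-- If `M` is a rank-2 matroid on a finite ground set with no loops and no coloops,
then `T_M` is convex along the portions of the lines `x + y = p` lying in the positive
quadrant. -/
theorem tutteConvexOnLines_of_rank_two [Fintype α] (M : Matroid α)
    (hrk : M.rankSet M.E = 2)
    (hloop : ∀ e ∈ M.E, M.rankSet {e} ≠ 0)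
    (hcoloop : ∀ e ∈ M.E, ¬ (∀ B, M.IsBase B → e ∈ B)) :
    M.TutteConvexOnLines := by
  classical
  have h2 : M.eRank = 2 := by rw [← eRk_ground, ← rankSet_eq_eRk, hrk]; rfl
  have := loopless_of_rankSet_singleton_ne_zero hloop
  have hconv := M.parallelClasses.convexOn_tutteOnLine fun Q hQ =>
    card_add_two_le_of_mem_parallelClasses h2 hcoloop hQ
  intro t x₁ y₁ x₂ y₂ ht₀ ht₁ hx₁ hy₁ hx₂ hy₂ hsum
  have hline : ∀ {x y : ℝ}, x + y = x₁ + y₁ →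
      M.tutte x y = (M.parallelClasses.tutteOnLine (x₁ + y₁ - 1)).eval y := fun h => by
    rw [tutte_eq_eval_tutteOnLine hrk, h]
  rw [hline (by linear_combination (1 - t) * hsum.symm), hline rfl, hline hsum.symm]
  simpa using (hconv (x₁ + y₁ - 1)).2 ⟨hy₁, by linarith⟩ ⟨hy₂, by linarith⟩ ht₀ (by linarith)
    (by ring)
end

section
/- For every n ≥ 3, the number of spanning trees of the wheel graph W_n equals L_{2n} − 2, where L_k denotes the k-th Lucas number; equivalently, the number of edge sets F of W_n such that the spanning subgraph of W_n with edge set F is a tree equals fib(2n−1) + fib(2n+1) − 2, where fib denotes the Fibonacci sequence with fib(1) = fib(2) = 1. -/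
/-!
Root a spanning tree of `W_n` at the hub and attach every rim vertex `i` to its parent: the hub,
`i - 1` or `i + 1`, coded by `0`, `1`, `2`. Spanning trees correspond bijectively to the codes
`p : ZMod n → Fin 3` in which no `2` is cyclically followed by a `1` (both would use the edge
`{i, i + 1}`) and which are not constantly `1` or constantly `2` (the rim would be a cycle cut off
from the hub). Cyclic words avoiding the factor `21` are counted by the trace of the `n`-th power
of the transfer matrix `!![1, 1, 1; 1, 1, 1; 1, 0, 1]`, whose powers have Fibonacci entries; this
trace is `L_{2n} = fib (2n - 1) + fib (2n + 1)`, and the two constant words account for the `- 2`.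
-/

/-- The wheel graph `W_n` on vertex set `{0, 1, …, n}`: the hub `0` is adjacent to every
rim vertex `1, …, n`, and two rim vertices are adjacent iff their labels are consecutive
modulo `n`. -/
def wheelGraph (n : ℕ) : SimpleGraph (Fin (n + 1)) :=
  SimpleGraph.fromRel (fun i j => i = 0 ∨ ((i.val : ZMod n) = (j.val : ZMod n) + 1))

/-- The set of spanning trees of a graph `G`, regarded as edge sets. -/
def spanningTreeSet {V : Type*} (G : SimpleGraph V) : Set (Set (Sym2 V)) :=
  {F | F ⊆ G.edgeSet ∧ (SimpleGraph.fromEdgeSet F).IsTree}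

/-- The set of acyclic orientations of a graph `G`: relations orienting each edge of `G`
in exactly one direction, whose transitive closure is irreflexive. -/
def acyclicOrientationSet {V : Type*} (G : SimpleGraph V) : Set (V → V → Prop) :=
  {o | (∀ a b, o a b → G.Adj a b) ∧ (∀ a b, G.Adj a b → (o a b ↔ ¬ o b a)) ∧
    (∀ a, ¬ Relation.TransGen o a a)}

open Finset SimpleGraph

section TransferMatrix

variable {α : Type*} [Fintype α] [DecidableEq α] (R : α → α → Prop) [DecidableRel R]

def relMatrix : Matrix α α ℕ := Matrix.of fun a b => if R a b then 1 else 0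

def chains (k : ℕ) (a c : α) : Finset (Fin (k + 1) → α) :=
  {w | (∀ i : Fin k, R (w i.castSucc) (w i.succ)) ∧ w 0 = a ∧ w (Fin.last k) = c}

variable {R}

theorem mem_chains {k : ℕ} {a c : α} {w : Fin (k + 1) → α} :
    w ∈ chains R k a c ↔
      (∀ i : Fin k, R (w i.castSucc) (w i.succ)) ∧ w 0 = a ∧ w (Fin.last k) = c := by
  simp [chains]

variable (R)

theorem card_chains_zero (a c : α) : #(chains R 0 a c) = if a = c then 1 else 0 := by
  split_ifs with hac
  · subst hac
    refine card_eq_one.mpr ⟨fun _ => a, ?_⟩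
    ext w
    simp [mem_chains, funext_iff, Fin.forall_fin_one]
  · rw [card_eq_zero, eq_empty_iff_forall_notMem]
    intro w hw
    obtain ⟨-, rfl, h⟩ := mem_chains.mp hw
    exact hac h

theorem card_chains_succ (k : ℕ) (a c : α) :
    #(chains R (k + 1) a c) = ∑ b, #(chains R k a b) * relMatrix R b c := by
  rw [card_eq_sum_card_fiberwise (f := fun w => w (Fin.last k).castSucc) (t := univ)
    fun _ _ => mem_univ _]
  refine sum_congr rfl fun b _ => ?_
  rw [relMatrix, Matrix.of_apply]
  split_ifs with hbc
  · rw [mul_one]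
    refine card_nbij' Fin.init (Fin.snoc · c) ?_ ?_ ?_ ?_
    · intro w hw
      simp only [coe_filter, Set.mem_ofPred_eq, mem_chains] at hw
      obtain ⟨⟨hR, h0, -⟩, hb⟩ := hw
      exact mem_chains.mpr ⟨fun i => by simpa [Fin.init] using hR i.castSucc, h0, hb⟩
    · intro w hw
      obtain ⟨hR, h0, hb⟩ := mem_chains.mp hw
      simp only [coe_filter, Set.mem_ofPred_eq, mem_chains]
      refine ⟨⟨fun i => ?_, by simpa using h0, by simp⟩, by simpa using hb⟩
      induction i using Fin.lastCases with
      | last => simpa [hb] using hbc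
      | cast i => rw [Fin.succ_castSucc, Fin.snoc_castSucc, Fin.snoc_castSucc]; exact hR i
    · intro w hw
      simp only [coe_filter, Set.mem_ofPred_eq, mem_chains] at hw
      beta_reduce
      rw [← hw.1.2.2, Fin.snoc_init_self]
    · intro w _
      exact Fin.init_snoc _ _
  · rw [mul_zero, card_eq_zero, filter_eq_empty_iff]
    rintro w hw rfl
    exact hbc (by simpa [(mem_chains.mp hw).2.2] using (mem_chains.mp hw).1 (Fin.last k))

theorem card_chains (k : ℕ) (a c : α) : #(chains R k a c) = (relMatrix R ^ k) a c := by
  induction k generalizing c with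
  | zero => rw [card_chains_zero, pow_zero, Matrix.one_apply]
  | succ k ih => simp only [card_chains_succ, ih, pow_succ, Matrix.mul_apply]

theorem card_cyclic_eq_trace_relMatrix_pow (n : ℕ) [NeZero n] :
    #{w : ZMod n → α | ∀ i, R (w i) (w (i + 1))} = (relMatrix R ^ n).trace := by
  obtain ⟨k, rfl⟩ : ∃ k, n = k + 1 := Nat.exists_eq_succ_of_ne_zero (NeZero.ne n)
  let e : Fin (k + 1) ≃+* ZMod (k + 1) := ZMod.finEquiv (k + 1)
  rw [card_equiv (e.toEquiv.symm.arrowCongr (Equiv.refl α))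
    (t := {w : Fin (k + 1) → α | ∀ i, R (w i) (w (i + 1))}) fun w => by
      simp only [mem_filter, mem_univ, true_and, Equiv.arrowCongr_apply, Equiv.coe_refl,
        Function.comp_apply, Equiv.symm_symm, RingEquiv.toEquiv_eq_coe, RingEquiv.coe_toEquiv,
        id_eq, map_add, map_one]
      exact e.toEquiv.forall_congr_left]
  simp only [Fin.forall_fin_succ', Fin.coeSucc_eq_succ, Fin.last_add_one]
  rw [Matrix.trace, card_eq_sum_card_fiberwise (f := fun w => w 0) (t := univ)
    fun _ _ => mem_univ _]
  refine sum_congr rfl fun a _ => ?_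
  rw [Matrix.diag, pow_succ, Matrix.mul_apply, card_eq_sum_card_fiberwise
    (f := fun w => w (Fin.last k)) (t := univ) fun _ _ => mem_univ _]
  refine sum_congr rfl fun c _ => ?_
  rw [← card_chains, filter_filter, filter_filter, relMatrix, Matrix.of_apply]
  split_ifs with hca
  · rw [mul_one]
    congr 1
    ext w
    simp only [mem_filter, mem_univ, true_and, mem_chains]
    refine ⟨fun ⟨⟨hR, _⟩, h⟩ => ⟨hR, h⟩,
      fun ⟨hR, h0, hl⟩ => ⟨⟨hR, ?_⟩, h0, hl⟩⟩
    rwa [h0, hl]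
  · rw [mul_zero, card_eq_zero, filter_eq_empty_iff]
    rintro w - ⟨⟨-, hR⟩, rfl, rfl⟩
    exact hca hR

end TransferMatrix

namespace SimpleGraph

variable {V : Type*} {G : SimpleGraph V}

theorem Connected.exists_adj_dist_lt (hG : G.Connected) {v r : V} (hvr : v ≠ r) :
    ∃ u, G.Adj v u ∧ G.dist u r < G.dist v r := by
  obtain ⟨p, hp⟩ := hG.exists_walk_length_eq_dist v r
  cases p with
  | nil => exact absurd rfl hvr
  | cons hadj q =>
    refine ⟨_, hadj, ?_⟩
    rw [← hp, Walk.length_cons]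
    exact Nat.lt_succ_of_le (dist_le q)

theorem edgeSet_fromEdgeSet_of_subset {F : Set (Sym2 V)} (hF : F ⊆ G.edgeSet) :
    (fromEdgeSet F).edgeSet = F := by
  rw [edgeSet_fromEdgeSet]
  exact (Set.disjoint_left.mpr fun _ he => G.not_isDiag_of_mem_edgeSet (hF he)).sdiff_eq_left

theorem isTree_fromEdgeSet_iff [Finite V] {F : Set (Sym2 V)} (hF : F ⊆ G.edgeSet) :
    (fromEdgeSet F).IsTree ↔ (fromEdgeSet F).Connected ∧ F.ncard + 1 = Nat.card V := by
  rw [isTree_iff_connected_and_card, Nat.card_coe_set_eq, edgeSet_fromEdgeSet_of_subset hF]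

end SimpleGraph

theorem ZMod.forall_of_imp_add_one {n : ℕ} [NeZero n] {P : ZMod n → Prop}
    (h : ∀ i, P i → P (i + 1)) {i : ZMod n} (hi : P i) (j : ZMod n) : P j := by
  have key : ∀ k : ℕ, P (i + k) := fun k => by
    induction k with
    | zero => simpa using hi
    | succ k ih => simpa [add_assoc] using h _ ih
  simpa using key (j - i).val

theorem ZMod.forall_of_imp_sub_one {n : ℕ} [NeZero n] {P : ZMod n → Prop}
    (h : ∀ i, P i → P (i - 1)) {i : ZMod n} (hi : P i) (j : ZMod n) : P j := by
  simpa using ZMod.forall_of_imp_add_one (P := fun k => P (-k))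
    (fun k hk => by rw [neg_add, ← sub_eq_add_neg]; exact h _ hk) (i := -i)
    (by simpa using hi) (-j)

instance Nat.fact_one_lt_of_two_lt {n : ℕ} [Fact (2 < n)] : Fact (1 < n) :=
  ⟨one_lt_two.trans Fact.out⟩

theorem ZMod.two_ne_zero_of_two_lt {n : ℕ} [Fact (2 < n)] : (2 : ZMod n) ≠ 0 :=
  fun h => ZMod.neg_one_ne_one (by linear_combination -h)

namespace wheelGraph

section Rim

variable {n : ℕ} [NeZero n]

def rim (i : ZMod n) : Fin (n + 1) := Fin.succ ⟨i.val, i.val_lt⟩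

theorem rim_ne_zero (i : ZMod n) : rim i ≠ 0 := Fin.succ_ne_zero _

theorem rim_injective : Function.Injective (rim (n := n)) := fun _ _ h =>
  ZMod.val_injective n (Fin.mk.inj_iff.mp (Fin.succ_injective _ h))

theorem natCast_rim (i : ZMod n) : ((rim i : ℕ) : ZMod n) = i + 1 := by
  simp [rim]

theorem exists_rim_eq {v : Fin (n + 1)} (hv : v ≠ 0) : ∃ i, rim i = v := by
  obtain ⟨j, rfl⟩ := Fin.exists_succ_eq.mpr hv
  exact ⟨j.val, by simp [rim, ZMod.val_cast_of_lt j.isLt]⟩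

theorem adj_rim_zero (i : ZMod n) : (wheelGraph n).Adj (rim i) 0 := by
  simp [wheelGraph, rim_ne_zero]

def neighbor (i : ZMod n) : Fin 3 → Fin (n + 1) := ![0, rim (i - 1), rim (i + 1)]

theorem neighbor_one (i : ZMod n) : neighbor i 1 = rim (i - 1) := rfl

end Rim

variable {n : ℕ} [Fact (2 < n)]

theorem adj_rim_rim {i j : ZMod n} :
    (wheelGraph n).Adj (rim i) (rim j) ↔ j = i - 1 ∨ j = i + 1 := by
  simp only [wheelGraph, fromRel_adj, natCast_rim, rim_ne_zero, false_or, ne_eq,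
    rim_injective.eq_iff, add_left_inj]
  constructor
  · rintro ⟨-, h | h⟩
    · exact Or.inl (by linear_combination -h)
    · exact Or.inr h
  · rintro (rfl | rfl)
    · exact ⟨fun h => one_ne_zero (by linear_combination h), Or.inl (by ring)⟩
    · exact ⟨by simp, Or.inr rfl⟩

theorem adj_nbr (i : ZMod n) (d : Fin 3) : (wheelGraph n).Adj (rim i) (neighbor i d) := by
  fin_cases d
  · exact adj_rim_zero i
  · exact adj_rim_rim.mpr (Or.inl rfl)
  · exact adj_rim_rim.mpr (Or.inr rfl)

theorem exists_nbr_eq_of_adj {i : ZMod n} {v : Fin (n + 1)} (h : (wheelGraph n).Adj (rim i) v) :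
    ∃ d, neighbor i d = v := by
  obtain rfl | hv := eq_or_ne v 0
  · exact ⟨0, rfl⟩
  obtain ⟨j, rfl⟩ := exists_rim_eq hv
  rcases adj_rim_rim.mp h with rfl | rfl
  · exact ⟨1, rfl⟩
  · exact ⟨2, rfl⟩

theorem neighbor_eq_rim_iff {i j : ZMod n} {d : Fin 3} :
    neighbor i d = rim j ↔ d = 1 ∧ j = i - 1 ∨ d = 2 ∧ j = i + 1 := by
  fin_cases d <;> simp [neighbor, (rim_ne_zero _).symm, rim_injective.eq_iff, eq_comm]

theorem neighbor_eq_zero_iff {i : ZMod n} {d : Fin 3} : neighbor i d = 0 ↔ d = 0 := by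
  fin_cases d <;> simp [neighbor, rim_ne_zero]

def Compatible (b c : Fin 3) : Prop := ¬(b = 2 ∧ c = 1)

instance : DecidableRel Compatible := fun _ _ => inferInstanceAs (Decidable ¬_)

theorem relMatrix_compatible : relMatrix Compatible = !![1, 1, 1; 1, 1, 1; 1, 0, 1] := by
  ext b c
  fin_cases b <;> fin_cases c <;> rfl

theorem relMatrix_compatible_pow (k : ℕ) :
    relMatrix Compatible ^ (k + 1) =
      !![(2 * k + 2).fib, (2 * k + 1).fib, (2 * k + 2).fib;
         (2 * k + 2).fib, (2 * k + 1).fib, (2 * k + 2).fib;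
         (2 * k + 1).fib, (2 * k).fib, (2 * k + 1).fib] := by
  induction k with
  | zero => simp [relMatrix_compatible]
  | succ k ih =>
    have h2 : (2 * k + 2).fib = (2 * k).fib + (2 * k + 1).fib := Nat.fib_add_two
    have h3 : (2 * k + 3).fib = (2 * k + 1).fib + (2 * k + 2).fib := Nat.fib_add_two
    have h4 : (2 * k + 4).fib = (2 * k + 2).fib + (2 * k + 3).fib := Nat.fib_add_two
    rw [pow_succ, ih, relMatrix_compatible, Matrix.mul_fin_three]
    simp only [mul_one, mul_zero, add_zero, show 2 * (k + 1) = 2 * k + 2 by ring,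
      show 2 * k + 2 + 2 = 2 * k + 4 by ring, show 2 * k + 2 + 1 = 2 * k + 3 by ring]
    congr 1
    simp only [Matrix.vecCons_inj, and_true]
    omega

theorem trace_relMatrix_compatible_pow (k : ℕ) :
    (relMatrix Compatible ^ (k + 1)).trace = (2 * k + 1).fib + (2 * k + 3).fib := by
  rw [relMatrix_compatible_pow, Matrix.trace_fin_three, Nat.fib_add_two (n := 2 * k + 1)]
  change (2 * k + 2).fib + (2 * k + 1).fib + (2 * k + 1).fib = _
  ring

def parentEdges (p : ZMod n → Fin 3) : Set (Sym2 (Fin (n + 1))) :=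
  Set.range fun i => s(rim i, neighbor i (p i))

def treeCodes (n : ℕ) : Set (ZMod n → Fin 3) :=
  {p | (∀ i, Compatible (p i) (p (i + 1))) ∧ p ≠ (fun _ => 1) ∧ p ≠ (fun _ => 2)}

theorem parentEdges_subset (p : ZMod n → Fin 3) : parentEdges p ⊆ (wheelGraph n).edgeSet := by
  rintro _ ⟨i, rfl⟩
  exact adj_nbr i (p i)

theorem adj_fromEdgeSet_parentEdges (p : ZMod n → Fin 3) (i : ZMod n) :
    (fromEdgeSet (parentEdges p)).Adj (rim i) (neighbor i (p i)) :=
  (fromEdgeSet_adj _).mpr ⟨⟨i, rfl⟩, (adj_nbr i (p i)).ne⟩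

theorem mk_rim_zero_mem_parentEdges_iff {p : ZMod n → Fin 3} {i : ZMod n} :
    s(rim i, 0) ∈ parentEdges p ↔ p i = 0 := by
  simp [parentEdges, rim_injective.eq_iff, neighbor_eq_zero_iff, rim_ne_zero]

theorem mk_rim_rim_add_one_mem_parentEdges_iff {p : ZMod n → Fin 3} {i : ZMod n} :
    s(rim i, rim (i + 1)) ∈ parentEdges p ↔ p i = 2 ∨ p (i + 1) = 1 := by
  simp only [parentEdges, Set.mem_range, Sym2.eq_iff, rim_injective.eq_iff, neighbor_eq_rim_iff]
  constructor
  · rintro ⟨j, ⟨rfl, ⟨-, h⟩ | ⟨h, -⟩⟩ | ⟨rfl, ⟨h, -⟩ | ⟨-, h⟩⟩⟩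
    · exact absurd (by linear_combination h) ZMod.two_ne_zero_of_two_lt
    · exact Or.inl h
    · exact Or.inr h
    · exact absurd (by linear_combination -h) ZMod.two_ne_zero_of_two_lt
  · rintro (h | h)
    · exact ⟨i, Or.inl ⟨rfl, Or.inr ⟨h, rfl⟩⟩⟩
    · exact ⟨i + 1, Or.inr ⟨rfl, Or.inl ⟨h, by ring⟩⟩⟩

theorem injective_parentEdge {p : ZMod n → Fin 3} (hp : ∀ i, Compatible (p i) (p (i + 1))) :
    Function.Injective fun i => s(rim i, neighbor i (p i)) := by
  intro i j hij
  rcases Sym2.eq_iff.mp hij with ⟨h, -⟩ | ⟨hi, hj⟩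
  · exact rim_injective h
  rw [eq_comm, neighbor_eq_rim_iff] at hi
  rw [neighbor_eq_rim_iff] at hj
  rcases hi with ⟨hj1, rfl⟩ | ⟨hj2, rfl⟩ <;> rcases hj with ⟨hi1, h⟩ | ⟨hi2, h⟩
  · exact absurd (by linear_combination h) ZMod.two_ne_zero_of_two_lt
  · exact absurd ⟨hi2, by rwa [sub_add_cancel]⟩ (hp (j - 1))
  · exact absurd ⟨hj2, hi1⟩ (hp j)
  · exact absurd (by linear_combination -h) ZMod.two_ne_zero_of_two_lt

theorem ncard_parentEdges {p : ZMod n → Fin 3} (hp : ∀ i, Compatible (p i) (p (i + 1))) :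
    (parentEdges p).ncard = n := by
  rw [parentEdges, Set.ncard_range_of_injective (injective_parentEdge hp), Nat.card_zmod]

theorem connected_fromEdgeSet_parentEdges {p : ZMod n → Fin 3} (hp : p ∈ treeCodes n) :
    (fromEdgeSet (parentEdges p)).Connected := by
  obtain ⟨hcompat, hne1, hne2⟩ := hp
  set T := fromEdgeSet (parentEdges p)
  have hcut : ∀ i, ¬T.Reachable (rim i) 0 → ¬T.Reachable (neighbor i (p i)) 0 := fun i hi h =>
    hi ((adj_fromEdgeSet_parentEdges p i).reachable.trans h)
  have hcut0 : ∀ i, ¬T.Reachable (rim i) 0 → p i ≠ 0 := fun i hi h =>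
    hcut i hi (by rw [h]; rfl)
  -- The parent of a rim vertex cut off from the hub is cut off and, by compatibility, points the
  -- same way, so the whole code would be constant.
  have hreach : ∀ i, T.Reachable (rim i) 0 := by
    by_contra! ⟨i, hi⟩
    rcases (show p i = 0 ∨ p i = 1 ∨ p i = 2 by omega) with h | h | h
    · exact hcut0 i hi h
    · refine hne1 (funext fun j => (ZMod.forall_of_imp_sub_one
        (P := fun j => ¬T.Reachable (rim j) 0 ∧ p j = 1) ?_ ⟨hi, h⟩ j).2)
      rintro j ⟨hj, hj1⟩
      have hj' : ¬T.Reachable (rim (j - 1)) 0 := by simpa [neighbor, hj1] using hcut j hj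
      have := hcompat (j - 1)
      rw [sub_add_cancel, hj1] at this
      have := hcut0 _ hj'
      exact ⟨hj', by unfold Compatible at *; omega⟩
    · refine hne2 (funext fun j => (ZMod.forall_of_imp_add_one
        (P := fun j => ¬T.Reachable (rim j) 0 ∧ p j = 2) ?_ ⟨hi, h⟩ j).2)
      rintro j ⟨hj, hj2⟩
      have hj' : ¬T.Reachable (rim (j + 1)) 0 := by simpa [neighbor, hj2] using hcut j hj
      have := hcompat j
      rw [hj2] at this
      have := hcut0 _ hj'
      exact ⟨hj', by unfold Compatible at *; omega⟩
  refine (connected_iff_exists_forall_reachable _).mpr ⟨0, fun v => ?_⟩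
  obtain rfl | hv := eq_or_ne v 0
  · rfl
  obtain ⟨i, rfl⟩ := exists_rim_eq hv
  exact (hreach i).symm

theorem parentEdges_mem_spanningTreeSet {p : ZMod n → Fin 3} (hp : p ∈ treeCodes n) :
    parentEdges p ∈ spanningTreeSet (wheelGraph n) := by
  refine ⟨parentEdges_subset p, (isTree_fromEdgeSet_iff (parentEdges_subset p)).mpr
    ⟨connected_fromEdgeSet_parentEdges hp, ?_⟩⟩
  rw [ncard_parentEdges hp.1, Nat.card_eq_fintype_card, Fintype.card_fin]

theorem injOn_parentEdges : Set.InjOn parentEdges (treeCodes n) := by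
  have hub : ∀ {p q : ZMod n → Fin 3}, parentEdges p = parentEdges q →
      ∀ i, p i = 0 ↔ q i = 0 :=
    fun hpq i => by rw [← mk_rim_zero_mem_parentEdges_iff, hpq, mk_rim_zero_mem_parentEdges_iff]
  -- If `p` points back and `q` forward at `j`, the shared edge `{j, j + 1}` forces the same at
  -- `j + 1`.
  have key : ∀ {p q : ZMod n → Fin 3}, q ∈ treeCodes n → parentEdges p = parentEdges q →
      ∀ i, p i = 1 → q i = 2 → False := by
    intro p q hq hpq i hp1 hq2
    refine hq.2.2 (funext fun j => (ZMod.forall_of_imp_add_one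
      (P := fun j => p j = 1 ∧ q j = 2) ?_ ⟨hp1, hq2⟩ j).2)
    rintro j ⟨hpj, hqj⟩
    have hrim : p j = 2 ∨ p (j + 1) = 1 := by
      rw [← mk_rim_rim_add_one_mem_parentEdges_iff, hpq, mk_rim_rim_add_one_mem_parentEdges_iff]
      exact Or.inl hqj
    have := hub hpq (j + 1)
    have := hq.1 j
    unfold Compatible at this
    omega
  intro p hp q hq hpq
  funext i
  have hFin3 : ∀ a b : Fin 3, (a = 0 ↔ b = 0) → (a = 1 → b = 2 → False) →
      (b = 1 → a = 2 → False) → a = b := by decide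
  exact hFin3 _ _ (hub hpq i) (key hq hpq i) (key hp hpq.symm i)

theorem exists_treeCodes_parentEdges_eq {F : Set (Sym2 (Fin (n + 1)))}
    (hF : F ∈ spanningTreeSet (wheelGraph n)) : ∃ p ∈ treeCodes n, parentEdges p = F := by
  obtain ⟨hFG, hT⟩ := hF
  set T := fromEdgeSet F
  set d : ZMod n → ℕ := fun i => T.dist (rim i) 0
  have hpar : ∀ i, ∃ c, T.Adj (rim i) (neighbor i c) ∧ T.dist (neighbor i c) 0 < d i := by
    intro i
    obtain ⟨v, hv, hlt⟩ := hT.connected.exists_adj_dist_lt (rim_ne_zero i)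
    obtain ⟨c, rfl⟩ := exists_nbr_eq_of_adj (hFG ((fromEdgeSet_adj _).mp hv).1)
    exact ⟨c, hv, hlt⟩
  choose p hpT hpd using hpar
  have hcompat : ∀ i, Compatible (p i) (p (i + 1)) := by
    rintro i ⟨h2, h1⟩
    have hi := hpd i
    have hi' := hpd (i + 1)
    rw [h2] at hi
    rw [h1, neighbor_one, add_sub_cancel_right] at hi'
    exact hi.not_gt hi'
  have hne : ∀ c, c ≠ 0 → p ≠ fun _ => c := by
    rintro c hc rfl
    obtain ⟨i, hi⟩ := Finite.exists_min d
    have := hpd i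
    fin_cases c
    · exact hc rfl
    · exact (hi (i - 1)).not_gt this
    · exact (hi (i + 1)).not_gt this
  refine ⟨p, ⟨hcompat, hne 1 one_ne_zero, hne 2 (by decide)⟩,
    Set.eq_of_subset_of_ncard_le ?_ ?_⟩
  · rintro _ ⟨i, rfl⟩
    exact ((fromEdgeSet_adj _).mp (hpT i)).1
  · have := ((isTree_fromEdgeSet_iff hFG).mp hT).2
    rw [Nat.card_eq_fintype_card, Fintype.card_fin] at this
    rw [ncard_parentEdges hcompat]
    omega

theorem spanningTreeSet_eq_image_parentEdges :
    spanningTreeSet (wheelGraph n) = parentEdges '' treeCodes n := by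
  ext F
  exact ⟨exists_treeCodes_parentEdges_eq,
    fun ⟨_, hp, hF⟩ => hF ▸ parentEdges_mem_spanningTreeSet hp⟩

theorem ncard_treeCodes : (treeCodes n).ncard = (relMatrix Compatible ^ n).trace - 2 := by
  have hcodes : treeCodes n =
      {p | ∀ i, Compatible (p i) (p (i + 1))} \ {fun _ => 1, fun _ => 2} := by
    ext p
    simp [treeCodes]
  have hconst : {fun _ => 1, fun _ => 2} ⊆
      {p : ZMod n → Fin 3 | ∀ i, Compatible (p i) (p (i + 1))} := by
    rintro _ (rfl | rfl) <;> simp [Compatible]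
  rw [← card_cyclic_eq_trace_relMatrix_pow, ← Set.ncard_coe_finset, coe_filter, hcodes,
    Set.ncard_sdiff hconst, Set.ncard_pair (fun h => by simpa using congrFun h 0)]
  simp

end wheelGraph

/-- For `n ≥ 3`, the number of spanning trees of the wheel graph `W_n` equals
`L_{2n} − 2 = fib(2n−1) + fib(2n+1) − 2`. -/
theorem card_spanningTrees_wheelGraph (n : ℕ) (hn : 3 ≤ n) :
    (spanningTreeSet (wheelGraph n)).ncard =
      Nat.fib (2 * n - 1) + Nat.fib (2 * n + 1) - 2 := by
  have : Fact (2 < n) := ⟨hn⟩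
  obtain ⟨k, rfl⟩ : ∃ k, n = k + 1 := ⟨n - 1, by omega⟩
  rw [wheelGraph.spanningTreeSet_eq_image_parentEdges, wheelGraph.injOn_parentEdges.ncard_image,
    wheelGraph.ncard_treeCodes, wheelGraph.trace_relMatrix_compatible_pow,
    show 2 * (k + 1) - 1 = 2 * k + 1 by omega, show 2 * (k + 1) + 1 = 2 * k + 3 by omega]
end
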